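/- arXiv:1003.3546 — 6 statements merged into one kernel-verified Lean document; each statement's English description precedes it below -/
import Mathlib

section
/- Assume the hypotheses below, let σ > 0 be a constant, and define the Fisher information matrix I^{(ϑ)} := (1/σ²) ∫₀^T Ṡ(ϑ,s) Ṡ(ϑ,s)ᵀ ds. Fix ϑ ∈ Θ and suppose there exist ε₀ > 0 and c > 0 such that ∫₀^T (S(ζ,t) − S(ϑ,t))² dt ≥ c·(|ζ−ϑ|² ∧ ε₀) for all ζ ∈ Θ. Then the d×d matrix I^{(ϑ)} is positive definite, in particular invertible. -/
open MeasureTheory intervalIntegral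

/-- Under the smooth-parametrization hypotheses, with constant `σ > 0`
and Fisher information `I^{(ϑ)} = (1/σ²) ∫₀^T Ṡ(ϑ,s)Ṡ(ϑ,s)ᵀ ds`, if
`∫₀^T (S(ζ,t)-S(ϑ,t))² dt ≥ c·(|ζ-ϑ|² ∧ ε₀)` for all `ζ ∈ Θ`, then `I^{(ϑ)}` is
positive definite, in particular invertible. -/
theorem fisher_information_posDef {d : ℕ}
    (Θ : Set (EuclideanSpace ℝ (Fin d))) (hΘ : IsOpen Θ)
    (T : ℝ) (hT : 0 < T)
    (S : EuclideanSpace ℝ (Fin d) → ℝ → ℝ)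
    (Sdot : EuclideanSpace ℝ (Fin d) → ℝ → EuclideanSpace ℝ (Fin d))
    (hScont : ContinuousOn (fun p : EuclideanSpace ℝ (Fin d) × ℝ => S p.1 p.2)
      (Θ ×ˢ Set.Icc 0 T))
    (hgrad : ∀ t ∈ Set.Icc (0:ℝ) T, ∀ ζ ∈ Θ, HasGradientAt (fun z => S z t) (Sdot ζ t) ζ)
    (hgradcont : ∀ t ∈ Set.Icc (0:ℝ) T, ContinuousOn (fun ζ => Sdot ζ t) Θ)
    (hgradbdd : ∀ K : Set (EuclideanSpace ℝ (Fin d)), IsCompact K → K ⊆ Θ →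
      ∃ M : ℝ, ∀ t ∈ Set.Icc (0:ℝ) T, ∀ ζ ∈ K, ‖Sdot ζ t‖ ≤ M)
    (σ : ℝ) (hσ : 0 < σ)
    (ϑ : EuclideanSpace ℝ (Fin d)) (hϑ : ϑ ∈ Θ)
    (ε₀ c : ℝ) (hε₀ : 0 < ε₀) (hc : 0 < c)
    (hlow : ∀ ζ ∈ Θ,
      c * min (‖ζ - ϑ‖ ^ 2) ε₀ ≤ ∫ t in (0:ℝ)..T, (S ζ t - S ϑ t) ^ 2)
    (I : Matrix (Fin d) (Fin d) ℝ)
    (hI : I = Matrix.of fun i j =>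
      (1 / σ ^ 2) * ∫ s in (0:ℝ)..T, Sdot ϑ s i * Sdot ϑ s j) :
    I.PosDef ∧ IsUnit I.det := by
  classical

  -- a closed ball around ϑ inside Θ
  obtain ⟨δ, hδ, hball⟩ : ∃ δ > 0, Metric.closedBall ϑ δ ⊆ Θ := by
    obtain ⟨ε, hε, h⟩ := Metric.isOpen_iff.mp hΘ ϑ hϑ
    exact ⟨ε / 2, by positivity,
      (Metric.closedBall_subset_ball (by linarith)).trans h⟩
  -- gradient bound on the ball
  obtain ⟨M₀, hM₀⟩ := hgradbdd (Metric.closedBall ϑ δ) (isCompact_closedBall ϑ δ) hball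
  set M : ℝ := max M₀ 0 with hMdef
  have hM0 : 0 ≤ M := le_max_right _ _
  have hM : ∀ t ∈ Set.Icc (0:ℝ) T, ∀ ζ ∈ Metric.closedBall ϑ δ, ‖Sdot ζ t‖ ≤ M :=
    fun t ht ζ hζ => (hM₀ t ht ζ hζ).trans (le_max_left _ _)
  -- Lipschitz estimate on the ball
  have hlip : ∀ t ∈ Set.Icc (0:ℝ) T, ∀ y ∈ Metric.closedBall ϑ δ,
      |S y t - S ϑ t| ≤ M * ‖y - ϑ‖ := by
    intro t ht y hy
    have := Convex.norm_image_sub_le_of_norm_hasFDerivWithin_le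
      (f := fun z => S z t)
      (f' := fun z => (InnerProductSpace.toDual ℝ (EuclideanSpace ℝ (Fin d))) (Sdot z t))
      (fun z hz => ((hgrad t ht z (hball hz)).hasFDerivAt).hasFDerivWithinAt)
      (fun z hz => by
        rw [LinearIsometryEquiv.norm_map]; exact hM t ht z hz)
      (convex_closedBall _ _) (Metric.mem_closedBall_self hδ.le) hy
    simpa [Real.norm_eq_abs] using this
  -- directional derivative at ϑ
  have hdir : ∀ t ∈ Set.Icc (0:ℝ) T, ∀ w : EuclideanSpace ℝ (Fin d),
      HasDerivAt (fun r : ℝ => S (ϑ + r • w) t) (inner ℝ (Sdot ϑ t) w : ℝ) 0 := by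
    intro t ht w
    have h1 : HasDerivAt (fun r : ℝ => ϑ + r • w) w 0 := by
      simpa using ((hasDerivAt_id (0:ℝ)).smul_const w).const_add ϑ
    have h2 := (hgrad t ht ϑ hϑ).hasFDerivAt
    have h3 : HasFDerivAt (fun z => S z t) ((InnerProductSpace.toDual ℝ (EuclideanSpace ℝ (Fin d))) (Sdot ϑ t))
        ((fun r : ℝ => ϑ + r • w) 0) := by simpa using h2
    have := h3.comp_hasDerivAt 0 h1
    exact this
  -- convergence of slopes along any null sequence
  have hslope : ∀ (w : EuclideanSpace ℝ (Fin d)) (r : ℕ → ℝ), (∀ n, r n ≠ 0) → Filter.Tendsto r Filter.atTop (nhds 0) →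
      ∀ t ∈ Set.Icc (0:ℝ) T,
      Filter.Tendsto (fun n => (S (ϑ + r n • w) t - S ϑ t) / r n) Filter.atTop
        (nhds (inner ℝ (Sdot ϑ t) w : ℝ)) := by
    intro w r hne hr0 t ht
    have hd := hasDerivAt_iff_tendsto_slope.mp (hdir t ht w)
    have hrt : Filter.Tendsto r Filter.atTop (nhdsWithin 0 {(0:ℝ)}ᶜ) :=
      tendsto_nhdsWithin_iff.mpr ⟨hr0, Filter.Eventually.of_forall fun n => hne n⟩
    have := hd.comp hrt
    refine this.congr fun n => ?_
    simp [slope_def_field, div_eq_inv_mul]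
  set μ : Measure ℝ := volume.restrict (Set.Ioc (0:ℝ) T) with hμ
  -- continuity in time
  have hScontT : ∀ ζ ∈ Θ, ContinuousOn (fun t => S ζ t) (Set.Icc (0:ℝ) T) := by
    intro ζ hζ
    exact hScont.comp (continuous_const.prodMk continuous_id).continuousOn
      fun t ht => ⟨hζ, ht⟩
  -- measurability of the inner products
  have hmeas : ∀ w : EuclideanSpace ℝ (Fin d), AEMeasurable (fun t => (inner ℝ (Sdot ϑ t) w : ℝ)) μ := by
    intro w
    set r : ℕ → ℝ := fun n => δ / ((n + 1) * (‖w‖ + 1)) with hrdef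
    have hwpos : (0:ℝ) < ‖w‖ + 1 := by positivity
    have hrpos : ∀ n, 0 < r n := by
      intro n; apply div_pos hδ; positivity
    have hr0 : Filter.Tendsto r Filter.atTop (nhds 0) := by
      have : r = fun n : ℕ => (δ / (‖w‖ + 1)) * (1 / (n + 1)) := by
        funext n; rw [hrdef, div_mul_div_comm, mul_one, mul_comm (‖w‖ + 1)]
      rw [this]
      simpa using tendsto_one_div_add_atTop_nhds_zero_nat.const_mul (δ / (‖w‖ + 1))
    have hmem : ∀ n, ϑ + r n • w ∈ Θ := by
      intro n
      apply hball
      rw [Metric.mem_closedBall, dist_eq_norm, add_sub_cancel_left, norm_smul,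
        Real.norm_eq_abs, abs_of_pos (hrpos n)]
      calc r n * ‖w‖ ≤ r n * (‖w‖ + 1) := by
            exact mul_le_mul_of_nonneg_left (by linarith) (hrpos n).le
        _ = δ / (n + 1) := by rw [hrdef]; field_simp
        _ ≤ δ := by
            rw [div_le_iff₀ (by positivity : (0:ℝ) < (n:ℝ) + 1)]
            nlinarith [Nat.cast_nonneg (α := ℝ) n, hδ]
    apply aemeasurable_of_tendsto_metrizable_ae Filter.atTop
      (f := fun n t => (S (ϑ + r n • w) t - S ϑ t) / r n)
    · intro n
      have hc1 : ContinuousOn (fun t => (S (ϑ + r n • w) t - S ϑ t) / r n) (Set.Ioc 0 T) :=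
        (((hScontT _ (hmem n)).sub (hScontT ϑ hϑ)).div_const _).mono Set.Ioc_subset_Icc_self
      exact hc1.aemeasurable measurableSet_Ioc
    · rw [hμ]
      filter_upwards [ae_restrict_mem measurableSet_Ioc] with t ht
      exact hslope w r (fun n => (hrpos n).ne') hr0 t (Set.Ioc_subset_Icc_self ht)
  -- coordinates of the gradient
  have hcoord : ∀ (i : Fin d) (t : ℝ), (inner ℝ (Sdot ϑ t) (EuclideanSpace.single i (1:ℝ)) : ℝ)
      = Sdot ϑ t i := by
    intro i t
    rw [EuclideanSpace.inner_single_right]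
    simp
  have hmeasi : ∀ i : Fin d, AEMeasurable (fun t => Sdot ϑ t i) μ := by
    intro i
    have := hmeas (EuclideanSpace.single i (1:ℝ))
    simpa [hcoord i] using this
  have hbddi : ∀ i : Fin d, ∀ t ∈ Set.Icc (0:ℝ) T, |Sdot ϑ t i| ≤ M := by
    intro i t ht
    rw [← hcoord i t]
    calc |(inner ℝ (Sdot ϑ t) (EuclideanSpace.single i (1:ℝ)) : ℝ)|
        ≤ ‖Sdot ϑ t‖ * ‖EuclideanSpace.single i (1:ℝ)‖ := abs_real_inner_le_norm _ _
      _ ≤ M := by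
          rw [EuclideanSpace.norm_single]
          simpa using hM t ht ϑ (Metric.mem_closedBall_self hδ.le)
  -- integrability of products of coordinates
  have hfin : μ Set.univ < ⊤ := by
    rw [hμ]
    simp [Real.volume_Ioc]
  have hint : ∀ i j : Fin d, Integrable (fun t => Sdot ϑ t i * Sdot ϑ t j) μ := by
    intro i j
    refine Integrable.mono' (g := fun _ => M * M) (integrable_const _)
      ((hmeasi i).mul (hmeasi j)).aestronglyMeasurable ?_
    rw [hμ]
    filter_upwards [ae_restrict_mem measurableSet_Ioc] with t ht
    have ht' := Set.Ioc_subset_Icc_self ht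
    rw [Real.norm_eq_abs, abs_mul]
    exact mul_le_mul (hbddi i t ht') (hbddi j t ht') (abs_nonneg _)
      ((abs_nonneg _).trans (hbddi i t ht'))
  -- quadratic form identity
  have hquad : ∀ x : Fin d → ℝ,
      dotProduct x (I.mulVec x)
        = (1 / σ ^ 2) * ∫ t, (inner ℝ (Sdot ϑ t) ((EuclideanSpace.equiv (Fin d) ℝ).symm x) : ℝ) ^ 2 ∂μ := by
    intro x
    set w : EuclideanSpace ℝ (Fin d) := (EuclideanSpace.equiv (Fin d) ℝ).symm x with hw
    have hwa : ∀ i, w i = x i := fun i => rfl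
    have hg : ∀ t, (inner ℝ (Sdot ϑ t) w : ℝ) = ∑ i, Sdot ϑ t i * x i := by
      intro t
      rw [PiLp.inner_apply]
      simp [hwa, mul_comm]
    have hsq : ∀ t, (inner ℝ (Sdot ϑ t) w : ℝ) ^ 2
        = ∑ i, ∑ j, (x i * x j) * (Sdot ϑ t i * Sdot ϑ t j) := by
      intro t
      rw [hg, sq, Finset.sum_mul_sum]
      exact Finset.sum_congr rfl fun i _ => Finset.sum_congr rfl fun j _ => by ring
    have hint2 : ∀ i j : Fin d,
        Integrable (fun t => (x i * x j) * (Sdot ϑ t i * Sdot ϑ t j)) μ :=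
      fun i j => (hint i j).const_mul _
    have h1 : ∫ t, (inner ℝ (Sdot ϑ t) w : ℝ) ^ 2 ∂μ
        = ∑ i, ∑ j, (x i * x j) * ∫ t, Sdot ϑ t i * Sdot ϑ t j ∂μ := by
      calc ∫ t, (inner ℝ (Sdot ϑ t) w : ℝ) ^ 2 ∂μ
          = ∫ t, ∑ i, ∑ j, (x i * x j) * (Sdot ϑ t i * Sdot ϑ t j) ∂μ := by
            congr 1; funext t; exact hsq t
        _ = ∑ i, ∫ t, ∑ j, (x i * x j) * (Sdot ϑ t i * Sdot ϑ t j) ∂μ := by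
            exact integral_finset_sum _ fun i _ => integrable_finset_sum _ fun j _ => hint2 i j
        _ = ∑ i, ∑ j, ∫ t, (x i * x j) * (Sdot ϑ t i * Sdot ϑ t j) ∂μ := by
            exact Finset.sum_congr rfl fun i _ => integral_finset_sum _ fun j _ => hint2 i j
        _ = ∑ i, ∑ j, (x i * x j) * ∫ t, Sdot ϑ t i * Sdot ϑ t j ∂μ := by
            exact Finset.sum_congr rfl fun i _ => Finset.sum_congr rfl fun j _ =>
              MeasureTheory.integral_const_mul _ _
    have hIij : ∀ i j, I i j = (1 / σ ^ 2) * ∫ t, Sdot ϑ t i * Sdot ϑ t j ∂μ := by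
      intro i j
      rw [hI]
      simp only [Matrix.of_apply]
      rw [intervalIntegral.integral_of_le hT.le]
    rw [h1]
    simp only [dotProduct, Matrix.mulVec, hIij]
    rw [Finset.mul_sum]
    refine Finset.sum_congr rfl fun i _ => ?_
    rw [Finset.mul_sum, Finset.mul_sum]
    refine Finset.sum_congr rfl fun j _ => ?_
    ring
  -- positivity of the quadratic form
  have hpos : ∀ x : Fin d → ℝ, x ≠ 0 →
      0 < ∫ t, (inner ℝ (Sdot ϑ t) ((EuclideanSpace.equiv (Fin d) ℝ).symm x) : ℝ) ^ 2 ∂μ := by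
    intro x hx
    set w : EuclideanSpace ℝ (Fin d) := (EuclideanSpace.equiv (Fin d) ℝ).symm x with hw
    have hwne : w ≠ 0 := by
      intro h
      apply hx
      have := congrArg (EuclideanSpace.equiv (Fin d) ℝ) h
      exact (EuclideanSpace.equiv (Fin d) ℝ).symm.injective (by rw [← hw, h, map_zero])
    have hwn : 0 < ‖w‖ := norm_pos_iff.mpr hwne
    set b : ℝ := min δ (Real.sqrt ε₀) with hb
    have hbpos : 0 < b := lt_min hδ (Real.sqrt_pos.mpr hε₀)
    set r : ℕ → ℝ := fun n => b / ((n + 1) * ‖w‖) with hrdef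
    have hrpos : ∀ n, 0 < r n := fun n => div_pos hbpos (by positivity)
    have hr0 : Filter.Tendsto r Filter.atTop (nhds 0) := by
      have : r = fun n : ℕ => (b / ‖w‖) * (1 / (n + 1)) := by
        funext n; rw [hrdef, div_mul_div_comm, mul_one, mul_comm ‖w‖]
      rw [this]
      simpa using tendsto_one_div_add_atTop_nhds_zero_nat.const_mul (b / ‖w‖)
    have hrw : ∀ n, r n * ‖w‖ = b / (n + 1) := by
      intro n; rw [hrdef]; field_simp
    have hrwb : ∀ n : ℕ, b / (n + 1) ≤ b := by
      intro n
      rw [div_le_iff₀ (by positivity : (0:ℝ) < (n:ℝ) + 1)]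
      nlinarith [Nat.cast_nonneg (α := ℝ) n, hbpos]
    have hnorm : ∀ n, ‖(ϑ + r n • w) - ϑ‖ = r n * ‖w‖ := by
      intro n
      rw [add_sub_cancel_left, norm_smul, Real.norm_eq_abs, abs_of_pos (hrpos n)]
    have hmemball : ∀ n, ϑ + r n • w ∈ Metric.closedBall ϑ δ := by
      intro n
      rw [Metric.mem_closedBall, dist_eq_norm, hnorm n, hrw n]
      exact (hrwb n).trans (min_le_left _ _)
    have hmem : ∀ n, ϑ + r n • w ∈ Θ := fun n => hball (hmemball n)
    -- the approximating functions
    set F : ℕ → ℝ → ℝ := fun n t => ((S (ϑ + r n • w) t - S ϑ t) / r n) ^ 2 with hF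
    have hFmeas : ∀ n, AEStronglyMeasurable (F n) μ := by
      intro n
      have hc1 : ContinuousOn (F n) (Set.Ioc 0 T) := by
        apply ContinuousOn.pow
        exact (((hScontT _ (hmem n)).sub (hScontT ϑ hϑ)).div_const _).mono
          Set.Ioc_subset_Icc_self
      exact (hc1.aemeasurable measurableSet_Ioc).aestronglyMeasurable
    have hFbdd : ∀ n, ∀ᵐ t ∂μ, ‖F n t‖ ≤ (M * ‖w‖) ^ 2 := by
      intro n
      rw [hμ]
      filter_upwards [ae_restrict_mem measurableSet_Ioc] with t ht
      have ht' := Set.Ioc_subset_Icc_self ht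
      have h1 : |S (ϑ + r n • w) t - S ϑ t| ≤ M * (r n * ‖w‖) := by
        have := hlip t ht' _ (hmemball n)
        rwa [hnorm n] at this
      have h2 : |(S (ϑ + r n • w) t - S ϑ t) / r n| ≤ M * ‖w‖ := by
        rw [abs_div, abs_of_pos (hrpos n), div_le_iff₀ (hrpos n)]
        calc |S (ϑ + r n • w) t - S ϑ t| ≤ M * (r n * ‖w‖) := h1
          _ = M * ‖w‖ * r n := by ring
      rw [Real.norm_eq_abs, hF]
      calc |((S (ϑ + r n • w) t - S ϑ t) / r n) ^ 2|
          = |(S (ϑ + r n • w) t - S ϑ t) / r n| ^ 2 := by rw [abs_pow]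
        _ ≤ (M * ‖w‖) ^ 2 := by
            apply pow_le_pow_left₀ (abs_nonneg _) h2
    -- dominated convergence
    have hlim : Filter.Tendsto (fun n => ∫ t, F n t ∂μ) Filter.atTop
        (nhds (∫ t, (inner ℝ (Sdot ϑ t) w : ℝ) ^ 2 ∂μ)) := by
      apply tendsto_integral_of_dominated_convergence (fun _ => (M * ‖w‖) ^ 2) hFmeas
        (integrable_const _) hFbdd
      rw [hμ]
      filter_upwards [ae_restrict_mem measurableSet_Ioc] with t ht
      exact (hslope w r (fun n => (hrpos n).ne') hr0 t (Set.Ioc_subset_Icc_self ht)).pow 2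
    -- lower bound for each n
    have hlb : ∀ n, c * ‖w‖ ^ 2 ≤ ∫ t, F n t ∂μ := by
      intro n
      have h0 := hlow _ (hmem n)
      have hminval : min (‖(ϑ + r n • w) - ϑ‖ ^ 2) ε₀ = (r n * ‖w‖) ^ 2 := by
        rw [hnorm n]
        apply min_eq_left
        have h1 : r n * ‖w‖ ≤ Real.sqrt ε₀ := by
          rw [hrw n]; exact (hrwb n).trans (min_le_right _ _)
        calc (r n * ‖w‖) ^ 2 ≤ Real.sqrt ε₀ ^ 2 := by
              apply pow_le_pow_left₀ (by positivity) h1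
          _ = ε₀ := Real.sq_sqrt hε₀.le
      rw [hminval] at h0
      have h2 : (∫ t in (0:ℝ)..T, (S (ϑ + r n • w) t - S ϑ t) ^ 2)
          = ∫ t, (S (ϑ + r n • w) t - S ϑ t) ^ 2 ∂μ := by
        rw [intervalIntegral.integral_of_le hT.le]
      rw [h2] at h0
      have h3 : ∫ t, F n t ∂μ = (r n ^ 2)⁻¹ * ∫ t, (S (ϑ + r n • w) t - S ϑ t) ^ 2 ∂μ := by
        rw [← MeasureTheory.integral_const_mul]
        congr 1; funext t
        rw [hF]
        field_simp
      rw [h3]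
      have h4 : c * ‖w‖ ^ 2 = (r n ^ 2)⁻¹ * (c * (r n * ‖w‖) ^ 2) := by
        field_simp [(hrpos n).ne']
      rw [h4]
      exact mul_le_mul_of_nonneg_left h0 (by positivity)
    have := ge_of_tendsto' hlim hlb
    calc (0:ℝ) < c * ‖w‖ ^ 2 := by positivity
      _ ≤ _ := this
  -- assemble
  have hHerm : I.IsHermitian := by
    rw [Matrix.IsHermitian]
    ext i j
    rw [hI]
    simp only [Matrix.conjTranspose_apply, Matrix.of_apply, star_trivial]
    have : (fun s => Sdot ϑ s j * Sdot ϑ s i) = fun s => Sdot ϑ s i * Sdot ϑ s j :=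
      funext fun s => mul_comm _ _
    rw [this]
  have hPD : I.PosDef := by
    refine Matrix.posDef_iff_dotProduct_mulVec.mpr ⟨hHerm, fun x hx => ?_⟩
    have hsx : star x = x := funext fun i => star_trivial _
    rw [hsx, hquad x]
    exact mul_pos (by positivity) (hpos x hx)
  exact ⟨hPD, isUnit_iff_ne_zero.mpr (Matrix.PosDef.det_pos hPD).ne'⟩
end

section
/- Let T > 0, σ > 0, and let f : ℝ → ℝ be continuously differentiable, T-periodic and non-constant. For ϑ = (ϑ₁,ϑ₂) ∈ (0,T) × (0,∞) define Ṡ(ϑ,t) := (−ϑ₂ f'(t−ϑ₁), f(t−ϑ₁))ᵀ. Then the Fisher information matrix I^{(ϑ)} := (1/σ²) ∫₀^T Ṡ(ϑ,t) Ṡ(ϑ,t)ᵀ dt is positive definite, in particular invertible, for every ϑ ∈ (0,T) × (0,∞). -/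
open MeasureTheory intervalIntegral

/-- For `f` continuously differentiable, `T`-periodic and non-constant,
and `Ṡ(ϑ,t) = (-ϑ₂ f'(t-ϑ₁), f(t-ϑ₁))ᵀ`, the Fisher information matrix
`I^{(ϑ)} = (1/σ²)∫₀^T Ṡ(ϑ,t)Ṡ(ϑ,t)ᵀ dt` is positive definite, in particular
invertible, for every `ϑ = (ϑ₁,ϑ₂) ∈ (0,T) × (0,∞)`. -/
theorem fisher_information_OU_amplitude_phase_posDef (T σ : ℝ) (hT : 0 < T) (hσ : 0 < σ)
    (f : ℝ → ℝ) (hf : ContDiff ℝ 1 f) (hper : Function.Periodic f T)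
    (hnonconst : ∃ x y : ℝ, f x ≠ f y) :
    ∀ ϑ₁ ∈ Set.Ioo (0:ℝ) T, ∀ ϑ₂ ∈ Set.Ioi (0:ℝ),
      ∀ Sdot : Fin 2 → ℝ → ℝ,
        Sdot = ![fun t => -ϑ₂ * deriv f (t - ϑ₁), fun t => f (t - ϑ₁)] →
      ∀ I : Matrix (Fin 2) (Fin 2) ℝ,
        I = Matrix.of (fun i j => (1 / σ ^ 2) * ∫ t in (0:ℝ)..T, Sdot i t * Sdot j t) →
        I.PosDef ∧ IsUnit I.det := by
  intro ϑ₁ hϑ₁ ϑ₂ hϑ₂ Sdot hS I hI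
  obtain ⟨u, v, huv⟩ := hnonconst
  have hϑ₂' : (0:ℝ) < ϑ₂ := hϑ₂
  have hdiff : Differentiable ℝ f := hf.differentiable one_ne_zero
  have hfc : Continuous f := hf.continuous
  have hf'c : Continuous (deriv f) := hf.continuous_deriv le_rfl
  -- periodicity of the derivative
  have hper' : Function.Periodic (deriv f) T := by
    intro x
    have hfun : (fun y => f (y + T)) = f := funext fun y => hper y
    calc deriv f (x + T) = deriv (fun y => f (y + T)) x := (deriv_comp_add_const f T x).symm
      _ = deriv f x := by rw [hfun]
  subst hS hI
  -- continuity of the components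
  have hc0 : Continuous (fun t : ℝ => -ϑ₂ * deriv f (t - ϑ₁)) :=
    continuous_const.mul (hf'c.comp (continuous_id.sub continuous_const))
  have hc1 : Continuous (fun t : ℝ => f (t - ϑ₁)) :=
    hfc.comp (continuous_id.sub continuous_const)
  set Sd : Fin 2 → ℝ → ℝ :=
    ![fun t => -ϑ₂ * deriv f (t - ϑ₁), fun t => f (t - ϑ₁)] with hSd
  have hc : ∀ i, Continuous (Sd i) := by
    intro i
    fin_cases i
    · simpa [hSd] using hc0
    · simpa [hSd] using hc1
  have hi : ∀ i j : Fin 2, IntervalIntegrable (fun t => Sd i t * Sd j t) volume 0 T :=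
    fun i j => ((hc i).mul (hc j)).intervalIntegrable 0 T
  set M : Matrix (Fin 2) (Fin 2) ℝ :=
    Matrix.of (fun i j => (1 / σ ^ 2) * ∫ t in (0:ℝ)..T, Sd i t * Sd j t) with hM
  -- symmetry
  have hsym : M.IsHermitian := by
    unfold Matrix.IsHermitian
    ext i j
    simp only [Matrix.conjTranspose_apply, star_trivial, hM, Matrix.of_apply]
    congr 1
    exact intervalIntegral.integral_congr fun t _ => mul_comm _ _
  have hσ2 : (0:ℝ) < 1 / σ ^ 2 := by positivity
  -- positivity of the quadratic form
  have hquad : ∀ x : Fin 2 → ℝ, x ≠ 0 → 0 < dotProduct (star x) (M.mulVec x) := by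
    intro x hx
    set g : ℝ → ℝ := fun t => x 0 * Sd 0 t + x 1 * Sd 1 t with hg
    have hgc : Continuous g := (continuous_const.mul (hc 0)).add (continuous_const.mul (hc 1))
    have i00 := (hi 0 0).const_mul (x 0 * x 0)
    have i01 := (hi 0 1).const_mul (x 0 * x 1)
    have i10 := (hi 1 0).const_mul (x 1 * x 0)
    have i11 := (hi 1 1).const_mul (x 1 * x 1)
    have hsplit : (∫ t in (0:ℝ)..T, (g t)^2)
        = x 0 * x 0 * (∫ t in (0:ℝ)..T, Sd 0 t * Sd 0 t)
          + x 0 * x 1 * (∫ t in (0:ℝ)..T, Sd 0 t * Sd 1 t)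
          + (x 1 * x 0 * (∫ t in (0:ℝ)..T, Sd 1 t * Sd 0 t)
          + x 1 * x 1 * (∫ t in (0:ℝ)..T, Sd 1 t * Sd 1 t)) := by
      have h1 : Set.EqOn (fun t => (g t)^2)
          (fun t => (x 0 * x 0 * (Sd 0 t * Sd 0 t) + x 0 * x 1 * (Sd 0 t * Sd 1 t))
            + (x 1 * x 0 * (Sd 1 t * Sd 0 t) + x 1 * x 1 * (Sd 1 t * Sd 1 t)))
          (Set.uIcc (0:ℝ) T) := fun t _ => by simp only [hg]; ring
      rw [intervalIntegral.integral_congr h1,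
        intervalIntegral.integral_add (i00.add i01) (i10.add i11),
        intervalIntegral.integral_add i00 i01, intervalIntegral.integral_add i10 i11,
        intervalIntegral.integral_const_mul, intervalIntegral.integral_const_mul,
        intervalIntegral.integral_const_mul, intervalIntegral.integral_const_mul]
    have hdot : dotProduct (star x) (M.mulVec x)
        = (1 / σ ^ 2) * ∫ t in (0:ℝ)..T, (g t)^2 := by
      simp only [dotProduct, Matrix.mulVec, Fin.sum_univ_two, Pi.star_apply,
        star_trivial, hM, Matrix.of_apply]
      rw [hsplit]
      ring
    rw [hdot]
    refine mul_pos hσ2 ?_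
    have hnn : 0 ≤ ∫ t in (0:ℝ)..T, (g t)^2 :=
      intervalIntegral.integral_nonneg hT.le (fun t _ => sq_nonneg _)
    refine lt_of_le_of_ne hnn fun h0 => ?_
    -- from zero integral to pointwise vanishing on `Ioc 0 T`
    have hg2i : IntervalIntegrable (fun t => (g t)^2) volume 0 T :=
      (hgc.pow 2).intervalIntegrable 0 T
    have hae := (intervalIntegral.integral_eq_zero_iff_of_le_of_nonneg_ae hT.le
      (Filter.Eventually.of_forall fun t => sq_nonneg (g t)) hg2i).mp h0.symm
    have heq : Set.EqOn (fun t => (g t)^2) 0 (Set.Ioc 0 T) :=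
      Measure.eqOn_Ioc_of_ae_eq volume hae (hgc.pow 2).continuousOn continuousOn_const
    have hg0 : ∀ t ∈ Set.Ioc (0:ℝ) T, g t = 0 := by
      intro t ht
      have := heq ht
      simpa [pow_eq_zero_iff] using this
    -- the combination G vanishes identically
    set G : ℝ → ℝ := fun s => x 0 * (-ϑ₂ * deriv f s) + x 1 * f s with hG
    have hGper : Function.Periodic G T := by
      intro s
      simp only [hG, hper s, hper' s]
    have hgG : ∀ t, g t = G (t - ϑ₁) := by
      intro t
      simp [hg, hG, hSd, Matrix.cons_val_zero, Matrix.cons_val_one, Matrix.head_cons]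
    have hGzero : ∀ s, G s = 0 := by
      intro s
      set n : ℤ := toIocDiv hT (-ϑ₁) s with hn
      have hmem : s - n • T ∈ Set.Ioc (-ϑ₁) (-ϑ₁ + T) := sub_toIocDiv_zsmul_mem_Ioc hT (-ϑ₁) s
      have h1 : G (s - n • T) = G s := hGper.sub_zsmul_eq n
      have ht : (s - n • T) + ϑ₁ ∈ Set.Ioc (0:ℝ) T := by
        constructor
        · linarith [hmem.1]
        · linarith [hmem.2]
      have h2 := hg0 _ ht
      rw [hgG] at h2
      simp only [add_sub_cancel_right] at h2
      rw [h1] at h2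
      exact h2
    -- derive a contradiction with non-constancy
    by_cases hx1 : x 1 = 0
    · have hx0 : x 0 ≠ 0 := by
        intro h
        apply hx
        funext i
        fin_cases i <;> simp [h, hx1]
      have hd0 : ∀ s, deriv f s = 0 := by
        intro s
        have := hGzero s
        simp only [hG, hx1, zero_mul, add_zero] at this
        have h2 : -ϑ₂ * deriv f s = 0 := by
          rcases mul_eq_zero.mp this with h | h
          · exact absurd h hx0
          · exact h
        rcases mul_eq_zero.mp h2 with h | h
        · exact absurd (neg_eq_zero.mp h) hϑ₂'.ne'
        · exact h
      exact huv (is_const_of_deriv_eq_zero hdiff hd0 u v)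
    · by_cases hx0 : x 0 = 0
      · have hf0 : ∀ s, f s = 0 := by
          intro s
          have := hGzero s
          simp only [hG, hx0, zero_mul, zero_add] at this
          rcases mul_eq_zero.mp this with h | h
          · exact absurd h hx1
          · exact h
        exact huv (by rw [hf0 u, hf0 v])
      · -- exponential solution case
        have ha : x 0 * ϑ₂ ≠ 0 := mul_ne_zero hx0 hϑ₂'.ne'
        set c : ℝ := x 1 / (x 0 * ϑ₂) with hc'
        have hcne : c ≠ 0 := div_ne_zero hx1 ha
        have hode : ∀ s, deriv f s = c * f s := by
          intro s
          have h := hGzero s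
          simp only [hG] at h
          rw [hc', div_mul_eq_mul_div, eq_div_iff ha]
          linear_combination -h
        set F : ℝ → ℝ := fun s => f s * Real.exp (-(c * s)) with hF
        have hFd : ∀ s, HasDerivAt F 0 s := by
          intro s
          have h1 : HasDerivAt f (c * f s) s := by
            have := (hdiff s).hasDerivAt
            rwa [hode s] at this
          have h2 : HasDerivAt (fun s : ℝ => Real.exp (-(c * s)))
              (Real.exp (-(c * s)) * -c) s := by
            have hinner : HasDerivAt (fun s : ℝ => -(c * s)) (-c) s := by
              simpa using (hasDerivAt_id s).const_mul (-c)
            exact (Real.hasDerivAt_exp (-(c * s))).comp s hinner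
          have : HasDerivAt F (c * f s * Real.exp (-(c * s)) + f s * (Real.exp (-(c * s)) * -c)) s :=
            h1.mul h2
          convert this using 1
          ring
        have hFdiff : Differentiable ℝ F := fun s => (hFd s).differentiableAt
        have hFconst : ∀ s, F s = F 0 :=
          fun s => is_const_of_deriv_eq_zero hFdiff (fun s => (hFd s).deriv) s 0
        have hfs : ∀ s, f s = f 0 * Real.exp (c * s) := by
          intro s
          have h := hFconst s
          simp only [hF, mul_zero, neg_zero, Real.exp_zero, mul_one] at h
          have h2 := congrArg (· * Real.exp (c * s)) h
          simpa [mul_assoc, ← Real.exp_add] using h2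
        have hfT : f T = f 0 := by simpa using hper 0
        have hf00 : f 0 = 0 := by
          have h := hfs T
          rw [hfT] at h
          have : f 0 * (Real.exp (c * T) - 1) = 0 := by linarith [h]
          rcases mul_eq_zero.mp this with h' | h'
          · exact h'
          · exfalso
            have : Real.exp (c * T) = 1 := by linarith
            rw [Real.exp_eq_one_iff] at this
            exact (mul_ne_zero hcne hT.ne') this
        apply huv
        rw [hfs u, hfs v, hf00, zero_mul, zero_mul]
  have hpd : M.PosDef := Matrix.PosDef.of_dotProduct_mulVec_pos hsym hquad
  exact ⟨hpd, isUnit_iff_ne_zero.mpr hpd.det_pos.ne'⟩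
end

section
/- Assume the triangular-signal setting below. Fix ϑ ∈ (0,T) and for ε > 0 set ρ_ε(ϑ,t) := sup_{ζ∈(0,T), 0<|ζ−ϑ|<ε} |f(t−ζ) − f(t−ϑ) − (ζ−ϑ)·g(t−ϑ)| / |ζ−ϑ|. Then ρ_ε(ϑ,·) belongs to L²([0,T], dt) for every ε > 0, and ∫₀^T ρ_ε(ϑ,t)² dt → 0 as ε ↓ 0. -/
open MeasureTheory intervalIntegral

section TriAuxSection
open Metric

namespace TriAux

noncomputable def rep (T x : ℝ) : ℝ := x - T * ⌊(x + 1) / T⌋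

lemma rep_mem {T : ℝ} (hT0 : 0 < T) (x : ℝ) : rep T x ∈ Set.Ico (-1 : ℝ) (T - 1) := by
  have h1 : (⌊(x + 1) / T⌋ : ℝ) ≤ (x + 1) / T := Int.floor_le _
  have h2 : (x + 1) / T < ⌊(x + 1) / T⌋ + 1 := Int.lt_floor_add_one _
  rw [le_div_iff₀ hT0] at h1
  rw [div_lt_iff₀ hT0] at h2
  constructor
  · unfold rep; nlinarith
  · unfold rep; nlinarith

lemma per_shift {T : ℝ} {f : ℝ → ℝ} (hfper : Function.Periodic f T) (x h : ℝ) :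
    f (x + h) = f (rep T x + h) := by
  have key := (hfper.int_mul ⌊(x + 1) / T⌋) (rep T x + h)
  have e : x + h = rep T x + h + (⌊(x + 1) / T⌋ : ℝ) * T := by unfold rep; ring
  rw [e, key]

lemma per_rep {T : ℝ} {f : ℝ → ℝ} (hfper : Function.Periodic f T) (x : ℝ) :
    f x = f (rep T x) := by
  simpa using per_shift hfper x 0

lemma fval {T : ℝ} (hT : 2 < T) {f : ℝ → ℝ}
    (hf1 : ∀ x : ℝ, |x| ≤ 1 → f x = 1 - |x|)
    (hf2 : ∀ x ∈ Set.Icc (1:ℝ) (T - 1), f x = 0)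
    {y : ℝ} (hy : y ∈ Set.Ico (-1 : ℝ) (T - 1)) : f y = max 0 (1 - |y|) := by
  rcases le_or_gt (|y|) 1 with h | h
  · rw [hf1 y h, max_eq_right]; linarith
  · have h1 : 1 < y := by
      rcases abs_cases y with ⟨he, _⟩ | ⟨he, _⟩
      · linarith
      · have := hy.1; linarith
    rw [hf2 y ⟨le_of_lt h1, by linarith [hy.2]⟩, max_eq_left]
    linarith [le_abs_self y]

def latt (T : ℝ) : Set ℝ := Set.range (fun n : ℤ => (n : ℝ) * T)

lemma latt_nonempty (T : ℝ) : (latt T).Nonempty := ⟨0, 0, by simp⟩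

lemma le_infDist_latt {T b x : ℝ} (h : ∀ n : ℤ, b ≤ |x - n * T|) : b ≤ infDist x (latt T) := by
  by_contra hc
  push_neg at hc
  obtain ⟨y, ⟨n, rfl⟩, hd⟩ := (infDist_lt_iff (latt_nonempty T)).1 hc
  rw [Real.dist_eq] at hd
  exact absurd hd (not_lt.2 (h n))

lemma f_eq_F {T : ℝ} (hT : 2 < T) {f : ℝ → ℝ} (hfper : Function.Periodic f T)
    (hf1 : ∀ x : ℝ, |x| ≤ 1 → f x = 1 - |x|)
    (hf2 : ∀ x ∈ Set.Icc (1:ℝ) (T - 1), f x = 0) (x : ℝ) :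
    f x = max 0 (1 - infDist x (latt T)) := by
  have hT0 : (0:ℝ) < T := by linarith
  have hmem := rep_mem hT0 x
  have hfx : f x = max 0 (1 - |rep T x|) := by rw [per_rep hfper]; exact fval hT hf1 hf2 hmem
  have hdiff : ∀ n : ℤ, x - (n : ℝ) * T = rep T x + ((⌊(x + 1) / T⌋ - n : ℤ) : ℝ) * T := by
    intro n; unfold rep; push_cast; ring
  have hdiff0 : x - ((⌊(x + 1) / T⌋ : ℤ) : ℝ) * T = rep T x := by
    unfold rep; push_cast; ring
  have habs : ∀ n : ℤ, n ≠ ⌊(x + 1) / T⌋ → T - |rep T x| ≤ |x - (n : ℝ) * T| := by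
    intro n hn
    have h1 : (1:ℝ) ≤ |((⌊(x + 1) / T⌋ - n : ℤ) : ℝ)| := by
      have h0 : (1:ℤ) ≤ |⌊(x + 1) / T⌋ - n| := Int.one_le_abs (sub_ne_zero.2 fun hh => hn hh.symm)
      calc (1:ℝ) = ((1:ℤ) : ℝ) := by norm_num
        _ ≤ ((|⌊(x + 1) / T⌋ - n| : ℤ) : ℝ) := by exact_mod_cast h0
        _ = |((⌊(x + 1) / T⌋ - n : ℤ) : ℝ)| := by push_cast; ring
    rw [hdiff n]
    set c : ℝ := ((⌊(x + 1) / T⌋ - n : ℤ) : ℝ) with hc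
    have hT' : T ≤ |c * T| := by
      rw [abs_mul, abs_of_pos hT0]; nlinarith
    have h3 : |c * T| ≤ |rep T x + c * T| + |rep T x| := by
      calc |c * T| = |(rep T x + c * T) + (-(rep T x))| := by ring_nf
        _ ≤ |rep T x + c * T| + |(-(rep T x))| := abs_add_le _ _
        _ = |rep T x + c * T| + |rep T x| := by rw [abs_neg]
    linarith
  rcases le_or_gt (|rep T x|) 1 with h | h
  · have hle : infDist x (latt T) ≤ |rep T x| := by
      have hkmem : ((⌊(x + 1) / T⌋ : ℤ) : ℝ) * T ∈ latt T := ⟨⌊(x + 1) / T⌋, rfl⟩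
      have hd := infDist_le_dist_of_mem (x := x) hkmem
      rw [Real.dist_eq, hdiff0] at hd
      exact hd
    have hge : |rep T x| ≤ infDist x (latt T) := by
      apply le_infDist_latt
      intro n
      rcases eq_or_ne n ⌊(x + 1) / T⌋ with rfl | hne
      · rw [hdiff0]
      · linarith [habs n hne]
    rw [hfx, show infDist x (latt T) = |rep T x| from le_antisymm hle hge]
  · have h1 : 1 < rep T x := by
      rcases abs_cases (rep T x) with ⟨he, _⟩ | ⟨he, _⟩
      · linarith
      · have := hmem.1; linarith
    have hyT : |rep T x| ≤ T - 1 := by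
      rw [abs_of_pos (by linarith : (0:ℝ) < rep T x)]; linarith [hmem.2]
    have hge : 1 ≤ infDist x (latt T) := by
      apply le_infDist_latt
      intro n
      rcases eq_or_ne n ⌊(x + 1) / T⌋ with rfl | hne
      · rw [hdiff0, abs_of_pos (by linarith : (0:ℝ) < rep T x)]; linarith
      · linarith [habs n hne]
    rw [hfx, max_eq_left (by linarith [le_abs_self (rep T x)]), max_eq_left (by linarith)]

lemma f_lip {T : ℝ} (hT : 2 < T) {f : ℝ → ℝ} (hfper : Function.Periodic f T)
    (hf1 : ∀ x : ℝ, |x| ≤ 1 → f x = 1 - |x|)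
    (hf2 : ∀ x ∈ Set.Icc (1:ℝ) (T - 1), f x = 0) (a b : ℝ) :
    |f a - f b| ≤ |a - b| := by
  rw [f_eq_F hT hfper hf1 hf2 a, f_eq_F hT hfper hf1 hf2 b]
  set dA := infDist a (latt T)
  set dB := infDist b (latt T)
  have h1 : |max (1 - dA) 0 - max (1 - dB) 0| ≤ |(1 - dA) - (1 - dB)| :=
    abs_max_sub_max_le_abs _ _ _
  have h2 : |(1 - dA) - (1 - dB)| = |dB - dA| := by rw [show (1 - dA) - (1 - dB) = dB - dA by ring]
  have h3 : |dB - dA| ≤ |a - b| := by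
    rw [abs_sub_le_iff]
    constructor
    · have := infDist_le_infDist_add_dist (x := b) (y := a) (s := latt T)
      rw [Real.dist_eq, abs_sub_comm] at this
      linarith
    · have := infDist_le_infDist_add_dist (x := a) (y := b) (s := latt T)
      rw [Real.dist_eq] at this
      linarith
  calc |max 0 (1 - dA) - max 0 (1 - dB)| = |max (1 - dA) 0 - max (1 - dB) 0| := by
        rw [max_comm, max_comm (1 - dB) 0]
    _ ≤ |(1 - dA) - (1 - dB)| := h1
    _ = |dB - dA| := h2
    _ ≤ |a - b| := h3

lemma f_cont {T : ℝ} (hT : 2 < T) {f : ℝ → ℝ} (hfper : Function.Periodic f T)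
    (hf1 : ∀ x : ℝ, |x| ≤ 1 → f x = 1 - |x|)
    (hf2 : ∀ x ∈ Set.Icc (1:ℝ) (T - 1), f x = 0) : Continuous f := by
  have : LipschitzWith 1 f := by
    apply LipschitzWith.of_dist_le_mul
    intro a b
    rw [Real.dist_eq, Real.dist_eq, NNReal.coe_one, one_mul]
    exact f_lip hT hfper hf1 hf2 a b
  exact this.continuous


noncomputable def E : ℝ → ℝ := fun y =>
  if y ∈ Set.Ioo (-1:ℝ) 0 then -1 else if y ∈ Set.Ioo (0:ℝ) 1 then 1 else 0

lemma E_measurable : Measurable E := by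
  unfold E
  exact Measurable.ite measurableSet_Ioo measurable_const
    (Measurable.ite measurableSet_Ioo measurable_const measurable_const)

lemma g_eq {T : ℝ} (hT : 2 < T) {g : ℝ → ℝ} (hgper : Function.Periodic g T)
    (hg1 : ∀ x ∈ Set.Ioo (0:ℝ) 1, g x = 1)
    (hg2 : ∀ x ∈ Set.Ioo (-1:ℝ) 0, g x = -1)
    (hg0 : g 0 = 0)
    (hg3 : ∀ x ∈ Set.Icc (1:ℝ) (T - 1), g x = 0) (x : ℝ) : g x = E (rep T x) := by
  have hT0 : (0:ℝ) < T := by linarith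
  obtain ⟨hy1, hy2⟩ := rep_mem hT0 x
  rw [per_rep hgper x]
  unfold E
  split_ifs with h1 h2
  · exact hg2 _ h1
  · exact hg1 _ h2
  · -- rep T x ∈ Ico (-1) (T-1), not in Ioo (-1) 0, not in Ioo 0 1
    rcases eq_or_lt_of_le hy1 with he | hlt
    · -- rep T x = -1
      rw [← he]
      have hper : g (-1 + T) = g (-1) := hgper (-1)
      rw [← hper, show (-1:ℝ) + T = T - 1 + 0 by ring, add_zero]
      exact hg3 _ ⟨by linarith, le_rfl⟩
    · simp only [Set.mem_Ioo, not_and, not_lt] at h1 h2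
      have h1' := h1 hlt
      rcases eq_or_lt_of_le h1' with he0 | hpos
      · rw [← he0]; exact hg0
      · exact hg3 _ ⟨h2 hpos, by linarith⟩

lemma g_bound {T : ℝ} (hT : 2 < T) {g : ℝ → ℝ} (hgper : Function.Periodic g T)
    (hg1 : ∀ x ∈ Set.Ioo (0:ℝ) 1, g x = 1)
    (hg2 : ∀ x ∈ Set.Ioo (-1:ℝ) 0, g x = -1)
    (hg0 : g 0 = 0)
    (hg3 : ∀ x ∈ Set.Icc (1:ℝ) (T - 1), g x = 0) (x : ℝ) : |g x| ≤ 1 := by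
  rw [g_eq hT hgper hg1 hg2 hg0 hg3 x]
  unfold E
  split_ifs <;> norm_num

lemma rep_measurable (T : ℝ) : Measurable (rep T) := by
  unfold rep
  apply Measurable.sub measurable_id
  apply Measurable.const_mul
  exact measurable_from_top.comp ((measurable_id.add_const 1).div_const T).floor

lemma g_meas {T : ℝ} (hT : 2 < T) {g : ℝ → ℝ} (hgper : Function.Periodic g T)
    (hg1 : ∀ x ∈ Set.Ioo (0:ℝ) 1, g x = 1)
    (hg2 : ∀ x ∈ Set.Ioo (-1:ℝ) 0, g x = -1)
    (hg0 : g 0 = 0)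
    (hg3 : ∀ x ∈ Set.Icc (1:ℝ) (T - 1), g x = 0) : Measurable g := by
  have : g = fun x => E (rep T x) := funext (g_eq hT hgper hg1 hg2 hg0 hg3)
  rw [this]
  exact E_measurable.comp (rep_measurable T)

lemma local_affine {T : ℝ} (hT : 2 < T) {f g : ℝ → ℝ}
    (hfper : Function.Periodic f T) (hgper : Function.Periodic g T)
    (hf1 : ∀ x : ℝ, |x| ≤ 1 → f x = 1 - |x|)
    (hf2 : ∀ x ∈ Set.Icc (1:ℝ) (T - 1), f x = 0)
    (hg1 : ∀ x ∈ Set.Ioo (0:ℝ) 1, g x = 1)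
    (hg2 : ∀ x ∈ Set.Ioo (-1:ℝ) 0, g x = -1)
    (hg0 : g 0 = 0)
    (hg3 : ∀ x ∈ Set.Icc (1:ℝ) (T - 1), g x = 0)
    (x : ℝ) (hx : rep T x ∉ ({-1, 0, 1} : Set ℝ)) :
    ∃ δ > 0, ∀ h : ℝ, |h| < δ → f (x + h) = f x - h * g x := by
  have hT0 : (0:ℝ) < T := by linarith
  obtain ⟨hy1, hy2⟩ := rep_mem hT0 x
  simp only [Set.mem_insert_iff, Set.mem_singleton_iff, not_or] at hx
  obtain ⟨hne1, hne0, hne2⟩ := hx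
  have hgx : g x = g (rep T x) := per_rep hgper x
  have hfx : f x = f (rep T x) := per_rep hfper x
  have key : ∀ h : ℝ, f (x + h) = f (rep T x + h) := fun h => per_shift hfper x h
  rcases lt_trichotomy (rep T x) 0 with hy0 | hy0 | hy0
  · have hy1' : -1 < rep T x := lt_of_le_of_ne hy1 (Ne.symm hne1)
    refine ⟨min (rep T x + 1) (-(rep T x)), lt_min (by linarith) (by linarith), ?_⟩
    intro h hh
    have hh1 : |h| < rep T x + 1 := lt_of_lt_of_le hh (min_le_left _ _)
    have hh2 : |h| < -(rep T x) := lt_of_lt_of_le hh (min_le_right _ _)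
    have hb1 : -1 < rep T x + h := by linarith [neg_abs_le h]
    have hb2 : rep T x + h < 0 := by linarith [le_abs_self h]
    rw [key, hfx, hgx, hf1 (rep T x + h) (abs_le.2 ⟨by linarith, by linarith⟩),
      hg2 _ ⟨hy1', hy0⟩, hf1 (rep T x) (abs_le.2 ⟨by linarith, by linarith⟩),
      abs_of_neg hb2, abs_of_neg hy0]
    ring
  · exact absurd hy0 hne0
  · rcases lt_trichotomy (rep T x) 1 with hy3 | hy3 | hy3
    · refine ⟨min (rep T x) (1 - rep T x), lt_min (by linarith) (by linarith), ?_⟩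
      intro h hh
      have hh1 : |h| < rep T x := lt_of_lt_of_le hh (min_le_left _ _)
      have hh2 : |h| < 1 - rep T x := lt_of_lt_of_le hh (min_le_right _ _)
      have hb1 : 0 < rep T x + h := by linarith [neg_abs_le h]
      have hb2 : rep T x + h < 1 := by linarith [le_abs_self h]
      rw [key, hfx, hgx, hf1 (rep T x + h) (abs_le.2 ⟨by linarith, by linarith⟩),
        hg1 _ ⟨hy0, hy3⟩, hf1 (rep T x) (abs_le.2 ⟨by linarith, by linarith⟩),
        abs_of_pos hb1, abs_of_pos hy0]
      ring
    · exact absurd hy3 hne2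
    · refine ⟨min (rep T x - 1) (T - 1 - rep T x), lt_min (by linarith) (by linarith [hy2]), ?_⟩
      intro h hh
      have hh1 : |h| < rep T x - 1 := lt_of_lt_of_le hh (min_le_left _ _)
      have hh2 : |h| < T - 1 - rep T x := lt_of_lt_of_le hh (min_le_right _ _)
      have hb1 : 1 ≤ rep T x + h := by linarith [neg_abs_le h]
      have hb2 : rep T x + h ≤ T - 1 := by linarith [le_abs_self h]
      rw [key, hfx, hgx, hf2 (rep T x + h) ⟨hb1, hb2⟩,
        hg3 _ ⟨by linarith, by linarith⟩, hf2 (rep T x) ⟨by linarith, by linarith⟩]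
      ring

lemma bad_countable (T ϑ : ℝ) :
    {t : ℝ | rep T (t - ϑ) ∈ ({-1, 0, 1} : Set ℝ)}.Countable := by
  apply Set.Countable.mono _ (Set.countable_iUnion
    (fun k : ℤ => (((Set.finite_singleton (ϑ + 1 + (k:ℝ) * T)).insert (ϑ + (k:ℝ) * T)).insert (ϑ - 1 + (k:ℝ) * T)).countable))
  intro t ht
  simp only [Set.mem_setOf_eq, Set.mem_insert_iff, Set.mem_singleton_iff] at ht
  have hrep : t - ϑ = rep T (t - ϑ) + ((⌊(t - ϑ + 1) / T⌋ : ℤ) : ℝ) * T := by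
    unfold rep; ring
  rw [Set.mem_iUnion]
  refine ⟨⌊(t - ϑ + 1) / T⌋, ?_⟩
  simp only [Set.mem_insert_iff, Set.mem_singleton_iff]
  rcases ht with h | h | h
  · left; rw [h] at hrep; linarith
  · right; left; rw [h] at hrep; linarith
  · right; right; rw [h] at hrep; linarith


end TriAux

end TriAuxSection

open Metric TriAux

/-- Triangular-signal setting (`T > 2`, `f` the `T`-periodic triangular
bump, `g` its `T`-periodic a.e.-derivative). Fix `ϑ ∈ (0,T)` and set
`ρ_ε(ϑ,t) := sup_{ζ∈(0,T), 0<|ζ-ϑ|<ε} |f(t-ζ)-f(t-ϑ)-(ζ-ϑ)g(t-ϑ)|/|ζ-ϑ|`. Then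
`ρ_ε(ϑ,·) ∈ L²([0,T],dt)` for every `ε > 0`, and `∫₀^T ρ_ε(ϑ,t)² dt → 0` as `ε ↓ 0`. -/
theorem triangular_signal_rho_memL2_and_tendsto_zero (T : ℝ) (hT : 2 < T)
    (f g : ℝ → ℝ) (hfper : Function.Periodic f T) (hgper : Function.Periodic g T)
    (hf1 : ∀ x : ℝ, |x| ≤ 1 → f x = 1 - |x|)
    (hf2 : ∀ x ∈ Set.Icc (1:ℝ) (T - 1), f x = 0)
    (hg1 : ∀ x ∈ Set.Ioo (0:ℝ) 1, g x = 1)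
    (hg2 : ∀ x ∈ Set.Ioo (-1:ℝ) 0, g x = -1)
    (hg0 : g 0 = 0)
    (hg3 : ∀ x ∈ Set.Icc (1:ℝ) (T - 1), g x = 0)
    (ϑ : ℝ) (hϑ : ϑ ∈ Set.Ioo 0 T)
    (ρ : ℝ → ℝ → ℝ)
    (hρ : ∀ ε t, ρ ε t =
      ⨆ ζ : {ζ : ℝ // ζ ∈ Set.Ioo 0 T ∧ 0 < |ζ - ϑ| ∧ |ζ - ϑ| < ε},
        |f (t - ζ.1) - f (t - ϑ) - (ζ.1 - ϑ) * g (t - ϑ)| / |ζ.1 - ϑ|) :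
    (∀ ε : ℝ, 0 < ε → MemLp (ρ ε) 2 (volume.restrict (Set.Icc 0 T))) ∧
    Filter.Tendsto (fun ε => ∫ t in (0:ℝ)..T, (ρ ε t) ^ 2)
      (nhdsWithin 0 (Set.Ioi 0)) (nhds 0) := by
  obtain ⟨hϑ0, hϑT⟩ := hϑ
  have hT0 : (0:ℝ) < T := by linarith
  have flip := f_lip hT hfper hf1 hf2
  have gbd := g_bound hT hgper hg1 hg2 hg0 hg3
  have fcont : Continuous f := f_cont hT hfper hf1 hf2
  have gmeas : Measurable g := g_meas hT hgper hg1 hg2 hg0 hg3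
  set term : ℝ → ℝ → ℝ := fun ζ t =>
    |f (t - ζ) - f (t - ϑ) - (ζ - ϑ) * g (t - ϑ)| / |ζ - ϑ| with hterm
  have term_nonneg : ∀ ζ t, 0 ≤ term ζ t := fun ζ t => div_nonneg (abs_nonneg _) (abs_nonneg _)
  have term_le : ∀ ζ t, 0 < |ζ - ϑ| → term ζ t ≤ 2 := by
    intro ζ t hζ
    rw [hterm]
    simp only
    rw [div_le_iff₀ hζ]
    have e1 : f (t - ζ) - f (t - ϑ) - (ζ - ϑ) * g (t - ϑ)
        = (f (t - ζ) - f (t - ϑ)) + (-((ζ - ϑ) * g (t - ϑ))) := by ring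
    rw [e1]
    have h2 : |f (t - ζ) - f (t - ϑ)| ≤ |ζ - ϑ| := by
      have := flip (t - ζ) (t - ϑ)
      have e2 : t - ζ - (t - ϑ) = -(ζ - ϑ) := by ring
      rwa [e2, abs_neg] at this
    calc |(f (t - ζ) - f (t - ϑ)) + (-((ζ - ϑ) * g (t - ϑ)))|
        ≤ |f (t - ζ) - f (t - ϑ)| + |(-((ζ - ϑ) * g (t - ϑ)))| := abs_add_le _ _
      _ = |f (t - ζ) - f (t - ϑ)| + |ζ - ϑ| * |g (t - ϑ)| := by rw [abs_neg, abs_mul]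
      _ ≤ |ζ - ϑ| + |ζ - ϑ| * 1 := add_le_add h2 (mul_le_mul_of_nonneg_left (gbd _) (abs_nonneg _))
      _ = 2 * |ζ - ϑ| := by ring
  have rho_nonneg : ∀ ε t, 0 ≤ ρ ε t := fun ε t => by
    rw [hρ]; exact Real.iSup_nonneg fun ζ => term_nonneg _ _
  have rho_le : ∀ ε t, ρ ε t ≤ 2 := fun ε t => by
    rw [hρ]; exact Real.iSup_le (fun ζ => term_le _ _ ζ.2.2.1) (by norm_num)
  -- measurability
  have hmeas : ∀ ε : ℝ, 0 < ε → Measurable (ρ ε) := by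
    intro ε hε
    have tmeas : ∀ ζ : ℝ, Measurable fun t => term ζ t := by
      intro ζ
      apply Measurable.div _ measurable_const
      apply Measurable.abs
      exact ((fcont.measurable.comp (measurable_id.sub_const ζ)).sub
        (fcont.measurable.comp (measurable_id.sub_const ϑ))).sub
        ((gmeas.comp (measurable_id.sub_const ϑ)).const_mul _)
    have hUopen : IsOpen {ζ : ℝ | ζ ∈ Set.Ioo 0 T ∧ 0 < |ζ - ϑ| ∧ |ζ - ϑ| < ε} := by
      have he : {ζ : ℝ | ζ ∈ Set.Ioo 0 T ∧ 0 < |ζ - ϑ| ∧ |ζ - ϑ| < ε}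
          = Set.Ioo 0 T ∩ ((fun ζ => |ζ - ϑ|) ⁻¹' Set.Ioo 0 ε) := by
        ext ζ; simp [Set.mem_Ioo, and_assoc]
      rw [he]
      exact isOpen_Ioo.inter
        (((continuous_id.sub continuous_const).abs).isOpen_preimage _ isOpen_Ioo)
    have bdd2 : ∀ t, BddAbove (Set.range fun ζ :
        {ζ : ℝ // ζ ∈ Set.Ioo 0 T ∧ 0 < |ζ - ϑ| ∧ |ζ - ϑ| < ε} => term ζ.1 t) := by
      intro t
      refine ⟨2, ?_⟩
      rintro _ ⟨ζ, rfl⟩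
      exact term_le _ _ ζ.2.2.1
    have bddQ : ∀ t, BddAbove (Set.range fun q :
        {q : ℚ // (q:ℝ) ∈ Set.Ioo 0 T ∧ 0 < |(q:ℝ) - ϑ| ∧ |(q:ℝ) - ϑ| < ε} => term q.1 t) := by
      intro t
      refine ⟨2, ?_⟩
      rintro _ ⟨q, rfl⟩
      exact term_le _ _ q.2.2.1
    have key : ∀ t, ρ ε t = ⨆ q :
        {q : ℚ // (q:ℝ) ∈ Set.Ioo 0 T ∧ 0 < |(q:ℝ) - ϑ| ∧ |(q:ℝ) - ϑ| < ε}, term q.1 t := by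
      intro t
      rw [hρ]
      apply le_antisymm
      · apply Real.iSup_le _ (Real.iSup_nonneg fun q => term_nonneg _ _)
        rintro ⟨ζ, hζ⟩
        have hcl : ζ ∈ closure ({z : ℝ | z ∈ Set.Ioo 0 T ∧ 0 < |z - ϑ| ∧ |z - ϑ| < ε}
            ∩ Set.range (fun q : ℚ => (q:ℝ))) := by
          rw [mem_closure_iff_nhds]
          intro V hV
          obtain ⟨r1, hr1, hball1⟩ := Metric.mem_nhds_iff.1 hV
          obtain ⟨r2, hr2, hball2⟩ := Metric.mem_nhds_iff.1 (hUopen.mem_nhds hζ)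
          have hr : 0 < min r1 r2 := lt_min hr1 hr2
          obtain ⟨q, hq1, hq2⟩ := exists_rat_btwn (show ζ - min r1 r2 < ζ by linarith)
          have hqball : (q:ℝ) ∈ Metric.ball ζ (min r1 r2) := by
            rw [Metric.mem_ball, Real.dist_eq, abs_lt]
            constructor <;> linarith
          exact ⟨(q:ℝ), hball1 (Metric.ball_subset_ball (min_le_left _ _) hqball),
            hball2 (Metric.ball_subset_ball (min_le_right _ _) hqball), q, rfl⟩
        haveI hne := mem_closure_iff_nhdsWithin_neBot.1 hcl
        have hcont : ContinuousAt (fun z => term z t) ζ := by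
          apply ContinuousAt.div
          · exact (((fcont.comp (continuous_const.sub continuous_id)).sub
              continuous_const).sub
              ((continuous_id.sub continuous_const).mul continuous_const)).abs.continuousAt
          · exact ((continuous_id.sub continuous_const).abs).continuousAt
          · exact ne_of_gt hζ.2.1
        have htend : Filter.Tendsto (fun z => term z t)
            (nhdsWithin ζ ({z : ℝ | z ∈ Set.Ioo 0 T ∧ 0 < |z - ϑ| ∧ |z - ϑ| < ε}
              ∩ Set.range (fun q : ℚ => (q:ℝ)))) (nhds (term ζ t)) :=
          hcont.continuousWithinAt
        refine le_of_tendsto htend ?_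
        filter_upwards [self_mem_nhdsWithin] with z hz
        obtain ⟨hzU, q, rfl⟩ := hz
        exact le_ciSup (bddQ t) (⟨q, hzU⟩ :
          {q : ℚ // (q:ℝ) ∈ Set.Ioo 0 T ∧ 0 < |(q:ℝ) - ϑ| ∧ |(q:ℝ) - ϑ| < ε})
      · apply Real.iSup_le _ (Real.iSup_nonneg fun ζ => term_nonneg _ _)
        rintro ⟨q, hq⟩
        exact le_ciSup (bdd2 t) (⟨(q:ℝ), hq⟩ :
          {ζ : ℝ // ζ ∈ Set.Ioo 0 T ∧ 0 < |ζ - ϑ| ∧ |ζ - ϑ| < ε})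
    have : ρ ε = fun t => ⨆ q :
        {q : ℚ // (q:ℝ) ∈ Set.Ioo 0 T ∧ 0 < |(q:ℝ) - ϑ| ∧ |(q:ℝ) - ϑ| < ε}, term q.1 t :=
      funext key
    rw [this]
    exact Measurable.iSup fun q => tmeas q.1
  constructor
  · intro ε hε
    refine MemLp.of_bound ((hmeas ε hε).aestronglyMeasurable) 2 ?_
    exact Filter.Eventually.of_forall fun t => by
      rw [Real.norm_eq_abs, abs_of_nonneg (rho_nonneg ε t)]; exact rho_le ε t
  · have h0T : (0:ℝ) ≤ T := le_of_lt hT0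
    have hrw : (fun ε => ∫ t in (0:ℝ)..T, (ρ ε t) ^ 2)
        = fun ε => ∫ t in Set.Ioc (0:ℝ) T, (ρ ε t) ^ 2 := by
      funext ε; rw [intervalIntegral.integral_of_le h0T]
    rw [hrw]
    have hbad : (volume : Measure ℝ) {t : ℝ | rep T (t - ϑ) ∈ ({-1, 0, 1} : Set ℝ)} = 0 :=
      (bad_countable T ϑ).measure_zero _
    have hDCT := MeasureTheory.tendsto_integral_filter_of_dominated_convergence
      (μ := volume.restrict (Set.Ioc (0:ℝ) T)) (l := nhdsWithin (0:ℝ) (Set.Ioi 0))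
      (F := fun ε t => (ρ ε t) ^ 2) (f := fun _ => (0:ℝ)) (bound := fun _ => (4:ℝ))
      ?_ ?_ ?_ ?_
    · simpa using hDCT
    · filter_upwards [self_mem_nhdsWithin] with ε hε
      exact ((hmeas ε hε).pow_const 2).aestronglyMeasurable
    · filter_upwards [self_mem_nhdsWithin] with ε hε
      apply Filter.Eventually.of_forall
      intro t
      rw [Real.norm_eq_abs, abs_of_nonneg (by positivity)]
      nlinarith [rho_le ε t, rho_nonneg ε t]
    · exact integrable_const _
    · have hae : ∀ᵐ t ∂(volume.restrict (Set.Ioc (0:ℝ) T)),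
          rep T (t - ϑ) ∉ ({-1, 0, 1} : Set ℝ) := by
        refine ae_restrict_of_ae ?_
        rw [ae_iff]
        simp only [not_not]
        exact hbad
      filter_upwards [hae] with t ht
      obtain ⟨δ, hδ, hδa⟩ := local_affine hT hfper hgper hf1 hf2 hg1 hg2 hg0 hg3 (t - ϑ) ht
      have hev : ∀ᶠ ε in nhdsWithin (0:ℝ) (Set.Ioi 0), (ρ ε t) ^ 2 = 0 := by
        filter_upwards [Ioo_mem_nhdsGT_of_mem (Set.mem_Ico.2 ⟨le_rfl, hδ⟩)] with ε hε
        have hz : ρ ε t = 0 := by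
          rw [hρ]
          have hzero : ∀ ζ : {ζ : ℝ // ζ ∈ Set.Ioo 0 T ∧ 0 < |ζ - ϑ| ∧ |ζ - ϑ| < ε},
              |f (t - ζ.1) - f (t - ϑ) - (ζ.1 - ϑ) * g (t - ϑ)| / |ζ.1 - ϑ| = 0 := by
            rintro ⟨ζ, hζ1, hζ2, hζ3⟩
            have h1 : |ϑ - ζ| < δ := by
              rw [abs_sub_comm]; exact lt_trans hζ3 hε.2
            have h2 := hδa (ϑ - ζ) h1
            rw [show t - ϑ + (ϑ - ζ) = t - ζ by ring] at h2
            simp only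
            rw [h2, show f (t - ϑ) - (ϑ - ζ) * g (t - ϑ) - f (t - ϑ) - (ζ - ϑ) * g (t - ϑ)
              = 0 by ring]
            simp
          rw [iSup_congr hzero]
          exact Real.iSup_const_zero
        rw [hz]; norm_num
      exact Filter.Tendsto.congr' (hev.mono fun ε h => h.symm) tendsto_const_nhds
end

section
/- Assume the triangular-signal setting below. Then the identifiability condition holds: for every ϑ ∈ (0,T) and every ε > 0, inf_{ζ∈(0,T), |ζ−ϑ|>ε} sup_{0≤s≤T} |f(s−ζ) − f(s−ϑ)| > 0. -/
open MeasureTheory intervalIntegral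

lemma triangular_f_bounds (T : ℝ) (hT : 2 < T) (f : ℝ → ℝ)
    (hfper : Function.Periodic f T)
    (hf1 : ∀ x : ℝ, |x| ≤ 1 → f x = 1 - |x|)
    (hf2 : ∀ x ∈ Set.Icc (1:ℝ) (T - 1), f x = 0) :
    ∀ y : ℝ, 0 ≤ f y ∧ f y ≤ 1 := by
  have hT0 : (0:ℝ) < T := by linarith
  intro y
  set k : ℤ := ⌊y / T⌋ with hk
  set z : ℝ := y - k * T with hzdef
  have hz0 : 0 ≤ z := by
    have := Int.floor_le (y / T)
    have : (k : ℝ) * T ≤ y := by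
      rw [hk]
      calc (⌊y / T⌋ : ℝ) * T ≤ (y / T) * T := by
            apply mul_le_mul_of_nonneg_right (Int.floor_le _) hT0.le
        _ = y := by field_simp
    linarith
  have hzT : z < T := by
    have h1 : y / T < k + 1 := Int.lt_floor_add_one (y / T)
    have : y < (k + 1) * T := by
      have := mul_lt_mul_of_pos_right h1 hT0
      rwa [div_mul_cancel₀ _ hT0.ne'] at this
    simp only [hzdef]; nlinarith
  have hfy : f y = f z := by
    have := hfper.sub_int_mul_eq (x := y) k
    simp only [hzdef]
    rw [this]
  rw [hfy]
  rcases le_or_gt z 1 with h1 | h1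
  · rw [hf1 z (by rw [abs_of_nonneg hz0]; exact h1), abs_of_nonneg hz0]
    constructor <;> linarith
  · rcases le_or_gt z (T - 1) with h2 | h2
    · rw [hf2 z ⟨h1.le, h2⟩]; norm_num
    · have : f z = f (z - T) := (hfper.sub_eq z).symm
      rw [this, hf1 (z - T) (by rw [abs_of_nonpos (by linarith)]; linarith),
        abs_of_nonpos (by linarith)]
      constructor <;> linarith

/-- In the triangular-signal setting, the identifiability condition
holds: for every `ϑ ∈ (0,T)` and every `ε > 0`,
`inf_{ζ∈(0,T), |ζ-ϑ|>ε} sup_{0≤s≤T} |f(s-ζ)-f(s-ϑ)| > 0`. -/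
theorem triangular_signal_identifiability (T : ℝ) (hT : 2 < T)
    (f g : ℝ → ℝ) (hfper : Function.Periodic f T) (hgper : Function.Periodic g T)
    (hf1 : ∀ x : ℝ, |x| ≤ 1 → f x = 1 - |x|)
    (hf2 : ∀ x ∈ Set.Icc (1:ℝ) (T - 1), f x = 0)
    (hg1 : ∀ x ∈ Set.Ioo (0:ℝ) 1, g x = 1)
    (hg2 : ∀ x ∈ Set.Ioo (-1:ℝ) 0, g x = -1)
    (hg0 : g 0 = 0)
    (hg3 : ∀ x ∈ Set.Icc (1:ℝ) (T - 1), g x = 0) :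
    ∀ ϑ ∈ Set.Ioo (0:ℝ) T, ∀ ε : ℝ, 0 < ε →
      ∃ δ : ℝ, 0 < δ ∧ ∀ ζ ∈ Set.Ioo (0:ℝ) T, ε < |ζ - ϑ| →
        δ ≤ ⨆ s : Set.Icc (0:ℝ) T, |f (s - ζ) - f (s - ϑ)| := by
  have hbd := triangular_f_bounds T hT f hfper hf1 hf2
  rintro ϑ ⟨hϑ0, hϑT⟩ ε hε
  refine ⟨min (min ε 1) (min ϑ (T - ϑ)), lt_min (lt_min hε one_pos) (lt_min hϑ0 (by linarith)), ?_⟩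
  rintro ζ ⟨hζ0, hζT⟩ hεζ
  set δ := min (min ε 1) (min ϑ (T - ϑ)) with hδ
  have hδε : δ ≤ ε := le_trans (min_le_left _ _) (min_le_left _ _)
  have hδ1 : δ ≤ 1 := le_trans (min_le_left _ _) (min_le_right _ _)
  have hδϑ : δ ≤ ϑ := le_trans (min_le_right _ _) (min_le_left _ _)
  have hδTϑ : δ ≤ T - ϑ := le_trans (min_le_right _ _) (min_le_right _ _)
  have hf0 : f 0 = 1 := by rw [hf1 0 (by norm_num)]; norm_num
  -- key: the value at s = ϑ is ≥ δ
  set x := ϑ - ζ with hx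
  have hxabs : ε < |x| := by rwa [hx, abs_sub_comm]
  have key : δ ≤ |f x - f 0| := by
    rw [hf0]
    rcases le_or_gt (|x|) 1 with h1 | h1
    · rw [hf1 x h1]
      have : |1 - |x| - 1| = |x| := by rw [show (1:ℝ) - |x| - 1 = -|x| by ring, abs_neg, abs_abs]
      rw [this]; linarith
    · rcases le_or_gt 0 x with hx0 | hx0
      · -- x > 1
        have hx1 : 1 < x := by rwa [abs_of_nonneg hx0] at h1
        rcases le_or_gt x (T - 1) with h2 | h2
        · rw [hf2 x ⟨hx1.le, h2⟩]; simp; linarith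
        · have hfx : f x = f (x - T) := (hfper.sub_eq x).symm
          have hxlt : x < ϑ := by simp only [hx]; linarith
          have habs : |x - T| ≤ 1 := by rw [abs_of_nonpos (by linarith)]; linarith
          rw [hfx, hf1 _ habs, abs_of_nonpos (by linarith : x - T ≤ 0)]
          rw [show (1:ℝ) - -(x - T) - 1 = x - T by ring, abs_of_nonpos (by linarith)]
          linarith
      · -- x < -1
        have hx1 : x < -1 := by rw [abs_of_neg hx0] at h1; linarith
        have hxgt : ϑ - T < x := by simp only [hx]; linarith
        rcases le_or_gt (1 - T) x with h2 | h2
        · have hfx : f x = f (x + T) := (hfper x).symm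
          rw [hfx, hf2 (x + T) ⟨by linarith, by linarith⟩]; simp; linarith
        · have hfx : f x = f (x + T) := (hfper x).symm
          have habs : |x + T| ≤ 1 := by rw [abs_of_nonneg (by linarith)]; linarith
          rw [hfx, hf1 _ habs, abs_of_nonneg (by linarith : 0 ≤ x + T)]
          rw [show (1:ℝ) - (x + T) - 1 = -(x + T) by ring, abs_neg,
            abs_of_nonneg (by linarith)]
          linarith
  have hmem : ϑ ∈ Set.Icc (0:ℝ) T := ⟨hϑ0.le, hϑT.le⟩
  have hBdd : BddAbove (Set.range fun s : Set.Icc (0:ℝ) T => |f (↑s - ζ) - f (↑s - ϑ)|) := by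
    refine ⟨2, ?_⟩
    rintro y ⟨s, rfl⟩
    have h1 := hbd ((s : ℝ) - ζ)
    have h2 := hbd ((s : ℝ) - ϑ)
    rw [abs_sub_le_iff]; constructor <;> linarith
  calc δ ≤ |f ((⟨ϑ, hmem⟩ : Set.Icc (0:ℝ) T) - ζ) - f ((⟨ϑ, hmem⟩ : Set.Icc (0:ℝ) T) - ϑ)| := by
        simpa [hx] using key
    _ ≤ _ := le_ciSup hBdd ⟨ϑ, hmem⟩
end

section
/- Assume the α-signal setting below with α > 1/2. Fix ϑ ∈ (0,T). Then g_α(·−ϑ) belongs to L²([0,T], dt); moreover, setting ρ_ε(ϑ,t) := sup_{ζ∈(0,T), 0<|ζ−ϑ|<ε} |f_α(t−ζ) − f_α(t−ϑ) − (ζ−ϑ)·g_α(t−ϑ)| / |ζ−ϑ|, there exists ε(ϑ) > 0 such that ρ_ε(ϑ,·) belongs to L²([0,T], dt) for every 0 < ε ≤ ε(ϑ), and ∫₀^T ρ_ε(ϑ,t)² dt → 0 as ε ↓ 0. -/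
open MeasureTheory intervalIntegral

open Set Filter

namespace AlphaSignalAux

noncomputable def psi (α x : ℝ) : ℝ := (min 1 |x|) ^ (min (α - 1) 0)

lemma psi_nonneg (α x : ℝ) : 0 ≤ psi α x :=
  Real.rpow_nonneg (le_min zero_le_one (abs_nonneg x)) _

lemma one_le_psi (α : ℝ) {x : ℝ} (hx : x ≠ 0) : 1 ≤ psi α x :=
  Real.one_le_rpow_of_pos_of_le_one_of_nonpos
    (lt_min one_pos (abs_pos.2 hx)) (min_le_left _ _) (min_le_right _ _)

lemma rpow_am1_le_psi {α y : ℝ} (hy : 0 < y) (hy1 : y ≤ 1) (x : ℝ) (hxy : |x| = y) :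
    y ^ (α - 1) ≤ psi α x := by
  rw [psi, hxy, min_eq_right hy1]
  rcases le_total α 1 with h1 | h1
  · rw [min_eq_left (by linarith)]
  · rw [min_eq_right (by linarith), Real.rpow_zero]
    exact Real.rpow_le_one hy.le hy1 (by linarith)

lemma sl_mvt {α : ℝ} (hα : 0 < α) {a b m : ℝ} (hm : 0 < m) (hma : m ≤ a) (ha1 : a ≤ 1)
    (hmb : m ≤ b) (hb1 : b ≤ 1) :
    |b ^ α - a ^ α| ≤ α * m ^ (min (α - 1) 0) * |b - a| := by
  have hder : ∀ x ∈ Icc m 1, HasDerivWithinAt (fun y : ℝ => y ^ α) (α * x ^ (α - 1)) (Icc m 1) x :=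
    fun x hx => (Real.hasDerivAt_rpow_const (Or.inl (hm.trans_le hx.1).ne')).hasDerivWithinAt
  have hbound : ∀ x ∈ Icc m 1, ‖α * x ^ (α - 1)‖ ≤ α * m ^ (min (α - 1) 0) := by
    intro x hx
    have hx0 : 0 < x := hm.trans_le hx.1
    rw [Real.norm_eq_abs, abs_of_nonneg (mul_nonneg hα.le (Real.rpow_nonneg hx0.le _))]
    rcases le_total α 1 with h1 | h1
    · rw [min_eq_left (by linarith)]
      exact mul_le_mul_of_nonneg_left (Real.rpow_le_rpow_of_nonpos hm hx.1 (by linarith)) hα.le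
    · rw [min_eq_right (by linarith), Real.rpow_zero]
      nlinarith [Real.rpow_le_one hx0.le hx.2 (by linarith : (0:ℝ) ≤ α - 1)]
  have h := (convex_Icc m 1).norm_image_sub_le_of_norm_hasDerivWithin_le hder hbound
    ⟨hma, ha1⟩ ⟨hmb, hb1⟩
  simpa [Real.norm_eq_abs] using h

lemma sl_holder {α : ℝ} (hα : 0 < α) (hα1 : α ≤ 1) {a b : ℝ} (ha : 0 ≤ a) (hab : a ≤ b) :
    b ^ α - a ^ α ≤ (b - a) ^ α := by
  have hb : 0 ≤ b := ha.trans hab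
  have hba : 0 ≤ b - a := sub_nonneg.2 hab
  have h := NNReal.rpow_add_le_add_rpow (a.toNNReal) ((b - a).toNNReal) hα.le hα1
  have hsum : a.toNNReal + (b - a).toNNReal = b.toNNReal := by
    rw [← Real.toNNReal_add ha hba]; ring_nf
  rw [hsum] at h
  have h' : (b.toNNReal : ℝ) ^ α ≤ (a.toNNReal : ℝ) ^ α + ((b - a).toNNReal : ℝ) ^ α := by
    rw [← NNReal.coe_rpow, ← NNReal.coe_rpow, ← NNReal.coe_rpow]
    exact_mod_cast h
  rw [Real.coe_toNNReal _ hb, Real.coe_toNNReal _ ha, Real.coe_toNNReal _ hba] at h'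
  linarith

lemma sl_mod {α : ℝ} (hα : 0 < α) {a b : ℝ} (ha : 0 ≤ a) (ha1 : a ≤ 1) (hb : 0 ≤ b)
    (hb1 : b ≤ 1) : |b ^ α - a ^ α| ≤ α * |b - a| + |b - a| ^ α := by
  rcases le_total α 1 with h1 | h1
  · rcases le_total a b with hab | hab
    · have h2 := sl_holder hα h1 ha hab
      have h3 : a ^ α ≤ b ^ α := Real.rpow_le_rpow ha hab hα.le
      rw [abs_of_nonneg (by linarith), abs_of_nonneg (by linarith)]
      nlinarith [mul_nonneg hα.le (sub_nonneg.2 hab)]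
    · have h2 := sl_holder hα h1 hb hab
      have h3 : b ^ α ≤ a ^ α := Real.rpow_le_rpow hb hab hα.le
      rw [abs_sub_comm, abs_of_nonneg (by linarith), abs_sub_comm b a,
        abs_of_nonneg (by linarith)]
      nlinarith [mul_nonneg hα.le (sub_nonneg.2 hab)]
  · have hder : ∀ x ∈ Icc (0:ℝ) 1,
        HasDerivWithinAt (fun y : ℝ => y ^ α) (α * x ^ (α - 1)) (Icc 0 1) x :=
      fun x _ => (Real.hasDerivAt_rpow_const (Or.inr h1)).hasDerivWithinAt
    have hbound : ∀ x ∈ Icc (0:ℝ) 1, ‖α * x ^ (α - 1)‖ ≤ α := by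
      intro x hx
      rw [Real.norm_eq_abs, abs_of_nonneg (mul_nonneg hα.le (Real.rpow_nonneg hx.1 _))]
      nlinarith [Real.rpow_le_one hx.1 hx.2 (by linarith : (0:ℝ) ≤ α - 1)]
    have h := (convex_Icc (0:ℝ) 1).norm_image_sub_le_of_norm_hasDerivWithin_le hder hbound
      ⟨ha, ha1⟩ ⟨hb, hb1⟩
    rw [Real.norm_eq_abs, Real.norm_eq_abs] at h
    nlinarith [Real.rpow_nonneg (abs_nonneg (b - a)) α]



noncomputable def dd (T x : ℝ) : ℝ := min (min |x| |x - T|) |x + T|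

section FG

variable {T α : ℝ} {f g : ℝ → ℝ}

lemma f_right (hfper : Function.Periodic f T)
    (hf1 : ∀ x : ℝ, |x| ≤ 1 → f x = (1 - |x|) ^ α) :
    ∀ x ∈ Icc (T - 1) T, f x = (1 - (T - x)) ^ α := by
  intro x hx
  have h1 : f x = f (x - T) := by
    have h := hfper (x - T); rw [sub_add_cancel] at h; exact h
  rw [h1, hf1 (x - T) (by rw [abs_of_nonpos (by linarith [hx.2])]; linarith [hx.1]),
    abs_of_nonpos (by linarith [hx.2])]
  ring_nf

lemma f_left (hfper : Function.Periodic f T)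
    (hf1 : ∀ x : ℝ, |x| ≤ 1 → f x = (1 - |x|) ^ α) :
    ∀ x ∈ Icc (-T) (1 - T), f x = (1 - (x + T)) ^ α := by
  intro x hx
  have h1 : f x = f (x + T) := (hfper x).symm
  rw [h1, hf1 (x + T) (by rw [abs_of_nonneg (by linarith [hx.1])]; linarith [hx.2]),
    abs_of_nonneg (by linarith [hx.1])]

lemma f_zero_left (hT : 2 < T) (hfper : Function.Periodic f T)
    (hf2 : ∀ x ∈ Set.Icc (1:ℝ) (T - 1), f x = 0) :
    ∀ x ∈ Icc (1 - T) (-1), f x = 0 := by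
  intro x hx
  have h1 : f x = f (x + T) := (hfper x).symm
  rw [h1, hf2 (x + T) ⟨by linarith [hx.1], by linarith [hx.2]⟩]

lemma f_eq_F (hT : 2 < T) (hα : 0 < α) (hfper : Function.Periodic f T)
    (hf1 : ∀ x : ℝ, |x| ≤ 1 → f x = (1 - |x|) ^ α)
    (hf2 : ∀ x ∈ Set.Icc (1:ℝ) (T - 1), f x = 0) :
    ∀ x ∈ Icc (-T) T, f x = (max (1 - dd T x) 0) ^ α := by
  intro x hx
  by_cases h1 : |x| ≤ 1
  · obtain ⟨hl, hr⟩ := abs_le.1 h1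
    have e1 : |x - T| = T - x := by rw [abs_of_nonpos (by linarith : x - T ≤ 0)]; ring
    have e2 : |x + T| = x + T := abs_of_nonneg (by linarith)
    have habs : 0 ≤ |x| := abs_nonneg x
    have hd : dd T x = |x| := by
      rw [dd, e1, e2, min_eq_left (by linarith : |x| ≤ T - x),
        min_eq_left (by linarith : |x| ≤ x + T)]
    rw [hf1 x h1, hd, max_eq_left (by linarith)]
  · push_neg at h1
    rcases le_or_gt x 0 with hx0 | hx0
    · have hxneg : x < -1 := by
        rcases abs_cases x with ⟨h, _⟩ | ⟨h, _⟩ <;> linarith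
      have e0 : |x| = -x := abs_of_nonpos hx0
      have e1 : |x - T| = T - x := by rw [abs_of_nonpos (by linarith : x - T ≤ 0)]; ring
      have e2 : |x + T| = x + T := abs_of_nonneg (by linarith [hx.1])
      rcases le_total x (1 - T) with h2 | h2
      · have hd : dd T x = x + T := by
          rw [dd, e0, e1, e2, min_eq_left (by linarith : -x ≤ T - x),
            min_eq_right (by linarith : x + T ≤ -x)]
        rw [f_left hfper hf1 x ⟨hx.1, h2⟩, hd, max_eq_left (by linarith [hx.1])]
      · have hd1 : 1 ≤ dd T x := by
          rw [dd, e0, e1, e2]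
          refine le_min (le_min (by linarith) (by linarith)) (by linarith [hx.1])
        rw [f_zero_left hT hfper hf2 x ⟨h2, by linarith⟩, max_eq_right (by linarith),
          Real.zero_rpow hα.ne']
    · have hx1 : 1 < x := by
        rcases abs_cases x with ⟨h, _⟩ | ⟨h, _⟩ <;> linarith
      have e0 : |x| = x := abs_of_nonneg hx0.le
      have e1 : |x - T| = T - x := by
        rw [abs_of_nonpos (by linarith [hx.2] : x - T ≤ 0)]; ring
      have e2 : |x + T| = x + T := abs_of_nonneg (by linarith)
      rcases le_total (T - 1) x with h2 | h2
      · have hd : dd T x = T - x := by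
          rw [dd, e0, e1, e2, min_eq_right (by linarith : T - x ≤ x),
            min_eq_left (by linarith : T - x ≤ x + T)]
        rw [f_right hfper hf1 x ⟨h2, hx.2⟩, hd, max_eq_left (by linarith [hx.2])]
      · have hd1 : 1 ≤ dd T x := by
          rw [dd, e0, e1, e2]
          refine le_min (le_min (by linarith) (by linarith)) (by linarith)
        rw [hf2 x ⟨hx1.le, h2⟩, max_eq_right (by linarith), Real.zero_rpow hα.ne']

lemma continuous_F (T : ℝ) {α : ℝ} (hα : 0 < α) :
    Continuous (fun x => (max (1 - dd T x) 0) ^ α) := by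
  have hdd : Continuous (dd T) := by
    unfold dd
    exact ((continuous_abs).min ((continuous_id.sub continuous_const).abs)).min
      ((continuous_id.add continuous_const).abs)
  exact ((continuous_const.sub hdd).max continuous_const).rpow_const fun x => Or.inr hα.le

lemma f_contAt (hT : 2 < T) (hα : 0 < α) (hfper : Function.Periodic f T)
    (hf1 : ∀ x : ℝ, |x| ≤ 1 → f x = (1 - |x|) ^ α)
    (hf2 : ∀ x ∈ Set.Icc (1:ℝ) (T - 1), f x = 0) :
    ∀ x ∈ Ioo (-T) T, ContinuousAt f x := by
  intro x hx
  refine ((continuous_F T hα).continuousAt).congr ?_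
  filter_upwards [Ioo_mem_nhds hx.1 hx.2] with y hy
  exact (f_eq_F hT hα hfper hf1 hf2 y (Ioo_subset_Icc_self hy)).symm

lemma dd_lip (T u v : ℝ) : |dd T v - dd T u| ≤ |v - u| := by
  have h1 := abs_min_sub_min_le_max (min |v| |v - T|) |v + T| (min |u| |u - T|) |u + T|
  have h2 := abs_min_sub_min_le_max |v| |v - T| |u| |u - T|
  have h3 := abs_abs_sub_abs_le_abs_sub v u
  have h4 : |v - T - (u - T)| = |v - u| := by rw [show v - T - (u - T) = v - u by ring]
  have h5 := (abs_abs_sub_abs_le_abs_sub (v - T) (u - T)).trans_eq h4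
  have h6 : |v + T - (u + T)| = |v - u| := by rw [show v + T - (u + T) = v - u by ring]
  have h7 := (abs_abs_sub_abs_le_abs_sub (v + T) (u + T)).trans_eq h6
  calc |dd T v - dd T u| ≤ max (max |(|v| - |u|)| |(|v - T| - |u - T|)|) |(|v + T| - |u + T|)| :=
        h1.trans (max_le_max h2 le_rfl)
    _ ≤ |v - u| := max_le (max_le h3 h5) h7

lemma f_mod (hT : 2 < T) (hα : 0 < α) (hfper : Function.Periodic f T)
    (hf1 : ∀ x : ℝ, |x| ≤ 1 → f x = (1 - |x|) ^ α)
    (hf2 : ∀ x ∈ Set.Icc (1:ℝ) (T - 1), f x = 0) :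
    ∀ u ∈ Icc (-T) T, ∀ v ∈ Icc (-T) T,
      |f v - f u| ≤ α * |v - u| + |v - u| ^ α := by
  intro u hu v hv
  rw [f_eq_F hT hα hfper hf1 hf2 u hu, f_eq_F hT hα hfper hf1 hf2 v hv]
  set a := max (1 - dd T u) 0 with ha_def
  set b := max (1 - dd T v) 0 with hb_def
  have hdu : 0 ≤ dd T u := le_min (le_min (abs_nonneg _) (abs_nonneg _)) (abs_nonneg _)
  have hdv : 0 ≤ dd T v := le_min (le_min (abs_nonneg _) (abs_nonneg _)) (abs_nonneg _)
  have ha : 0 ≤ a := le_max_right _ _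
  have hb : 0 ≤ b := le_max_right _ _
  have ha1 : a ≤ 1 := max_le (by linarith) zero_le_one
  have hb1 : b ≤ 1 := max_le (by linarith) zero_le_one
  have hba : |b - a| ≤ |v - u| := by
    have h1 := abs_max_sub_max_le_max (1 - dd T v) 0 (1 - dd T u) 0
    have h2 : |1 - dd T v - (1 - dd T u)| = |dd T v - dd T u| := by
      rw [show 1 - dd T v - (1 - dd T u) = dd T u - dd T v by ring, abs_sub_comm]
    rw [h2] at h1
    refine h1.trans (max_le (dd_lip T u v) ?_)
    simpa using abs_nonneg (v - u)
  calc |b ^ α - a ^ α| ≤ α * |b - a| + |b - a| ^ α := sl_mod hα ha ha1 hb hb1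
    _ ≤ α * |v - u| + |v - u| ^ α := by
        exact add_le_add (mul_le_mul_of_nonneg_left hba hα.le)
          (Real.rpow_le_rpow (abs_nonneg _) hba hα.le)

end FG



noncomputable def ww (T α x : ℝ) : ℝ :=
  psi α (x - (1 - T)) + psi α (x + 1) + psi α x + psi α (x - 1) + psi α (x - (T - 1))

section FG2

variable {T α : ℝ} {f g : ℝ → ℝ}

lemma ww_nonneg (T α x : ℝ) : 0 ≤ ww T α x := by
  unfold ww
  have := psi_nonneg α (x - (1 - T)); have := psi_nonneg α (x + 1)
  have := psi_nonneg α x; have := psi_nonneg α (x - 1)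
  have := psi_nonneg α (x - (T - 1)); linarith

lemma g_right (hgper : Function.Periodic g T)
    (hg2 : ∀ x ∈ Set.Ioo (-1:ℝ) 0, g x = -(α * (1 + x) ^ (α - 1))) :
    ∀ x ∈ Ioo (T - 1) T, g x = -(α * (1 + (x - T)) ^ (α - 1)) := by
  intro x hx
  have h1 : g x = g (x - T) := by
    have h := hgper (x - T); rw [sub_add_cancel] at h; exact h
  rw [h1, hg2 (x - T) ⟨by linarith [hx.1], by linarith [hx.2]⟩]

lemma g_left (hgper : Function.Periodic g T)
    (hg1 : ∀ x ∈ Set.Ioo (0:ℝ) 1, g x = α * (1 - x) ^ (α - 1)) :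
    ∀ x ∈ Ioo (-T) (1 - T), g x = α * (1 - (x + T)) ^ (α - 1) := by
  intro x hx
  have h1 : g x = g (x + T) := (hgper x).symm
  rw [h1, hg1 (x + T) ⟨by linarith [hx.1], by linarith [hx.2]⟩]

lemma g_zero_left (hgper : Function.Periodic g T)
    (hg3 : ∀ x ∈ Set.Icc (1:ℝ) (T - 1), g x = 0) :
    ∀ x ∈ Icc (1 - T) (-1), g x = 0 := by
  intro x hx
  have h1 : g x = g (x + T) := (hgper x).symm
  rw [h1, hg3 (x + T) ⟨by linarith [hx.1], by linarith [hx.2]⟩]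

lemma g_bound (hT : 2 < T) (hα : 0 < α) (hgper : Function.Periodic g T)
    (hg1 : ∀ x ∈ Set.Ioo (0:ℝ) 1, g x = α * (1 - x) ^ (α - 1))
    (hg2 : ∀ x ∈ Set.Ioo (-1:ℝ) 0, g x = -(α * (1 + x) ^ (α - 1)))
    (hg0 : g 0 = 0)
    (hg3 : ∀ x ∈ Set.Icc (1:ℝ) (T - 1), g x = 0) :
    ∀ x ∈ Ioo (-T) T, |g x| ≤ α * ww T α x := by
  intro x hx
  have hw1 := psi_nonneg α (x - (1 - T)); have hw2 := psi_nonneg α (x + 1)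
  have hw3 := psi_nonneg α x; have hw4 := psi_nonneg α (x - 1)
  have hw5 := psi_nonneg α (x - (T - 1))
  rcases lt_trichotomy x 0 with hx0 | rfl | hx0
  · rcases lt_or_ge (-1:ℝ) x with h1 | h1
    · rw [hg2 x ⟨h1, hx0⟩, abs_neg,
        abs_of_nonneg (mul_nonneg hα.le (Real.rpow_nonneg (by linarith) _))]
      have hb := rpow_am1_le_psi (α := α) (y := 1 + x) (by linarith) (by linarith) (x + 1)
        (by rw [abs_of_nonneg (by linarith)]; ring)
      have : psi α (x + 1) ≤ ww T α x := by unfold ww; linarith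
      nlinarith
    · rcases le_or_gt (1 - T) x with h2 | h2
      · rw [g_zero_left hgper hg3 x ⟨h2, h1⟩, abs_zero]
        have : 0 ≤ ww T α x := ww_nonneg T α x
        positivity
      · rw [g_left hgper hg1 x ⟨hx.1, h2⟩,
          abs_of_nonneg (mul_nonneg hα.le (Real.rpow_nonneg (by linarith [hx.1]) _))]
        have hb := rpow_am1_le_psi (α := α) (y := 1 - (x + T)) (by linarith)
          (by linarith [hx.1]) (x - (1 - T)) (by rw [abs_of_nonpos (by linarith)]; ring)
        have : psi α (x - (1 - T)) ≤ ww T α x := by unfold ww; linarith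
        nlinarith
  · rw [hg0, abs_zero]
    have : 0 ≤ ww T α 0 := ww_nonneg T α 0
    positivity
  · rcases lt_or_ge x 1 with h1 | h1
    · rw [hg1 x ⟨hx0, h1⟩,
        abs_of_nonneg (mul_nonneg hα.le (Real.rpow_nonneg (by linarith) _))]
      have hb := rpow_am1_le_psi (α := α) (y := 1 - x) (by linarith) (by linarith) (x - 1)
        (by rw [abs_of_nonpos (by linarith)]; ring)
      have : psi α (x - 1) ≤ ww T α x := by unfold ww; linarith
      nlinarith
    · rcases le_or_gt x (T - 1) with h2 | h2
      · rw [hg3 x ⟨h1, h2⟩, abs_zero]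
        have : 0 ≤ ww T α x := ww_nonneg T α x
        positivity
      · rw [g_right hgper hg2 x ⟨h2, hx.2⟩, abs_neg,
          abs_of_nonneg (mul_nonneg hα.le (Real.rpow_nonneg (by linarith [hx.2]) _))]
        have hb := rpow_am1_le_psi (α := α) (y := 1 + (x - T)) (by linarith)
          (by linarith [hx.2]) (x - (T - 1)) (by rw [abs_of_nonneg (by linarith)]; ring)
        have : psi α (x - (T - 1)) ≤ ww T α x := by unfold ww; linarith
        nlinarith

lemma f_deriv (hT : 2 < T) (hα : 0 < α) (hfper : Function.Periodic f T)
    (hgper : Function.Periodic g T)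
    (hf1 : ∀ x : ℝ, |x| ≤ 1 → f x = (1 - |x|) ^ α)
    (hf2 : ∀ x ∈ Set.Icc (1:ℝ) (T - 1), f x = 0)
    (hg1 : ∀ x ∈ Set.Ioo (0:ℝ) 1, g x = α * (1 - x) ^ (α - 1))
    (hg2 : ∀ x ∈ Set.Ioo (-1:ℝ) 0, g x = -(α * (1 + x) ^ (α - 1)))
    (hg3 : ∀ x ∈ Set.Icc (1:ℝ) (T - 1), g x = 0) :
    ∀ x ∈ Ioo (-T) T, x ∉ ({1 - T, -1, 0, 1, T - 1} : Set ℝ) →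
      HasDerivAt f (-(g x)) x := by
  intro x hx hxB
  simp only [Set.mem_insert_iff, Set.mem_singleton_iff, not_or] at hxB
  obtain ⟨hb1, hb2, hb3, hb4, hb5⟩ := hxB
  rcases lt_trichotomy x 0 with hx0 | hx0 | hx0
  · rcases lt_or_ge (-1:ℝ) x with h1 | h1
    · have hev : f =ᶠ[nhds x] fun y => (1 + y) ^ α := by
        filter_upwards [Ioo_mem_nhds h1 hx0] with y hy
        rw [hf1 y (by rw [abs_of_nonpos hy.2.le]; linarith [hy.1]), abs_of_nonpos hy.2.le]
        ring_nf
      have hinner : HasDerivAt (fun y : ℝ => 1 + y) 1 x := by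
        simpa using (hasDerivAt_id x).const_add (1:ℝ)
      have hd : HasDerivAt (fun y : ℝ => (1 + y) ^ α) (α * (1 + x) ^ (α - 1) * 1) x :=
        (Real.hasDerivAt_rpow_const (p := α)
          (Or.inl (by intro hc; exact hb2 (by linarith)))).comp x hinner
      have heq : -(g x) = α * (1 + x) ^ (α - 1) * 1 := by
        rw [hg2 x ⟨h1, hx0⟩]; ring
      rw [heq]
      exact hd.congr_of_eventuallyEq hev
    · have h1' : x < -1 := lt_of_le_of_ne h1 hb2
      rcases lt_or_ge (1 - T) x with h2 | h2
      · have hev : f =ᶠ[nhds x] fun _ => (0:ℝ) := by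
          filter_upwards [Ioo_mem_nhds h2 h1'] with y hy
          exact f_zero_left hT hfper hf2 y ⟨hy.1.le, hy.2.le⟩
        have heq : -(g x) = 0 := by
          rw [g_zero_left hgper hg3 x ⟨h2.le, h1'.le⟩]; ring
        rw [heq]
        exact (hasDerivAt_const x (0:ℝ)).congr_of_eventuallyEq hev
      · have h2' : x < 1 - T := lt_of_le_of_ne h2 hb1
        have hev : f =ᶠ[nhds x] fun y => (1 - (y + T)) ^ α := by
          filter_upwards [Ioo_mem_nhds hx.1 h2'] with y hy
          exact f_left hfper hf1 y ⟨hy.1.le, hy.2.le⟩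
        have hinner : HasDerivAt (fun y : ℝ => 1 - (y + T)) (-1) x := by
          simpa using ((hasDerivAt_id x).add_const T).const_sub (1:ℝ)
        have hd : HasDerivAt (fun y : ℝ => (1 - (y + T)) ^ α)
            (α * (1 - (x + T)) ^ (α - 1) * (-1)) x :=
          (Real.hasDerivAt_rpow_const (p := α)
            (Or.inl (by intro hc; exact hb1 (by linarith)))).comp x hinner
        have heq : -(g x) = α * (1 - (x + T)) ^ (α - 1) * (-1) := by
          rw [g_left hgper hg1 x ⟨hx.1, h2'⟩]; ring
        rw [heq]
        exact hd.congr_of_eventuallyEq hev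
  · exact absurd hx0 hb3
  · rcases lt_or_ge x 1 with h1 | h1
    · have hev : f =ᶠ[nhds x] fun y => (1 - y) ^ α := by
        filter_upwards [Ioo_mem_nhds hx0 h1] with y hy
        rw [hf1 y (by rw [abs_of_nonneg hy.1.le]; linarith [hy.2]), abs_of_nonneg hy.1.le]
      have hinner : HasDerivAt (fun y : ℝ => 1 - y) (-1) x := by
        simpa using (hasDerivAt_id x).const_sub (1:ℝ)
      have hd : HasDerivAt (fun y : ℝ => (1 - y) ^ α) (α * (1 - x) ^ (α - 1) * (-1)) x :=
        (Real.hasDerivAt_rpow_const (p := α)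
          (Or.inl (by intro hc; exact hb4 (by linarith)))).comp x hinner
      have heq : -(g x) = α * (1 - x) ^ (α - 1) * (-1) := by
        rw [hg1 x ⟨hx0, h1⟩]; ring
      rw [heq]
      exact hd.congr_of_eventuallyEq hev
    · have h1' : 1 < x := lt_of_le_of_ne h1 (Ne.symm hb4)
      rcases lt_or_ge x (T - 1) with h2 | h2
      · have hev : f =ᶠ[nhds x] fun _ => (0:ℝ) := by
          filter_upwards [Ioo_mem_nhds h1' h2] with y hy
          exact hf2 y ⟨hy.1.le, hy.2.le⟩
        have heq : -(g x) = 0 := by rw [hg3 x ⟨h1'.le, h2.le⟩]; ring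
        rw [heq]
        exact (hasDerivAt_const x (0:ℝ)).congr_of_eventuallyEq hev
      · have h2' : T - 1 < x := lt_of_le_of_ne h2 (Ne.symm hb5)
        have hev : f =ᶠ[nhds x] fun y => (1 - (T - y)) ^ α := by
          filter_upwards [Ioo_mem_nhds h2' hx.2] with y hy
          exact f_right hfper hf1 y ⟨hy.1.le, hy.2.le⟩
        have hinner : HasDerivAt (fun y : ℝ => 1 - (T - y)) (-(-1)) x := by
          exact ((hasDerivAt_id x).const_sub T).const_sub (1:ℝ)
        have hd : HasDerivAt (fun y : ℝ => (1 - (T - y)) ^ α)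
            (α * (1 - (T - x)) ^ (α - 1) * -(-1)) x :=
          (Real.hasDerivAt_rpow_const (p := α)
            (Or.inl (by intro hc; exact hb5 (by linarith)))).comp x hinner
        have heq : -(g x) = α * (1 - (T - x)) ^ (α - 1) * -(-1) := by
          rw [g_right hgper hg2 x ⟨h2', hx.2⟩,
            show (1:ℝ) - (T - x) = 1 + (x - T) by ring]
          ring
        rw [heq]
        exact hd.congr_of_eventuallyEq hev

end FG2



lemma half_rpow_le {α d : ℝ} (hα2 : 1/2 < α) (hd : 0 < d) :
    (d / 2) ^ (min (α - 1) 0) ≤ 2 * d ^ (min (α - 1) 0) := by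
  have he1 : (-1:ℝ) ≤ min (α - 1) 0 := le_min (by linarith) (by norm_num)
  rw [Real.div_rpow hd.le (by norm_num)]
  have h2 : (1:ℝ)/2 ≤ (2:ℝ) ^ (min (α - 1) 0) := by
    have h := Real.rpow_le_rpow_of_exponent_le one_le_two he1
    rwa [Real.rpow_neg_one, show ((2:ℝ))⁻¹ = 1/2 by norm_num] at h
  have hd2 : (0:ℝ) < (2:ℝ) ^ (min (α - 1) 0) := Real.rpow_pos_of_pos two_pos _
  rw [div_le_iff₀ hd2]
  nlinarith [Real.rpow_nonneg hd.le (min (α - 1) 0)]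

lemma psi_eq {α y : ℝ} (x : ℝ) (h : |x| = y) (h1 : y ≤ 1) :
    psi α x = y ^ (min (α - 1) 0) := by
  rw [psi, h, min_eq_right h1]

lemma sl_step {α : ℝ} (hα2 : 1/2 < α) {a b δ W : ℝ} (ha0 : 0 < a) (ha1 : a ≤ 1)
    (hb : a - |δ| ≤ b) (hb1 : b ≤ 1) (hδa : |δ| ≤ a / 2) (hba : |b - a| ≤ |δ|)
    (hW : a ^ (min (α - 1) 0) ≤ W) :
    |b ^ α - a ^ α| ≤ 2 * α * W * |δ| := by
  have hα : 0 < α := by linarith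
  have hm : 0 < a / 2 := by linarith
  have hmb : a / 2 ≤ b := by linarith
  have hsl := sl_mvt hα hm (by linarith) ha1 hmb hb1
  have hhalf := half_rpow_le hα2 ha0
  have hW0 : 0 ≤ a ^ (min (α - 1) 0) := Real.rpow_nonneg ha0.le _
  calc |b ^ α - a ^ α| ≤ α * (a / 2) ^ (min (α - 1) 0) * |b - a| := hsl
    _ ≤ α * (2 * a ^ (min (α - 1) 0)) * |δ| := by
        apply mul_le_mul (mul_le_mul_of_nonneg_left hhalf hα.le) hba (abs_nonneg _)
          (by positivity)
    _ ≤ 2 * α * W * |δ| := by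
        nlinarith [mul_nonneg (mul_nonneg hα.le (abs_nonneg δ)) (sub_nonneg.2 hW)]

section KEY

variable {T α : ℝ} {f g : ℝ → ℝ}

set_option maxHeartbeats 1000000 in
lemma key (hT : 2 < T) (hα2 : 1/2 < α)
    (hfper : Function.Periodic f T) (hgper : Function.Periodic g T)
    (hf1 : ∀ x : ℝ, |x| ≤ 1 → f x = (1 - |x|) ^ α)
    (hf2 : ∀ x ∈ Set.Icc (1:ℝ) (T - 1), f x = 0)
    (hg1 : ∀ x ∈ Set.Ioo (0:ℝ) 1, g x = α * (1 - x) ^ (α - 1))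
    (hg2 : ∀ x ∈ Set.Ioo (-1:ℝ) 0, g x = -(α * (1 + x) ^ (α - 1)))
    (hg0 : g 0 = 0)
    (hg3 : ∀ x ∈ Set.Icc (1:ℝ) (T - 1), g x = 0)
    {ϑ : ℝ} (hϑ0 : 0 < ϑ) (hϑT : ϑ < T) :
    ∀ u, -ϑ ≤ u → u ≤ T - ϑ → u ∉ ({1 - T, -1, 0, 1, T - 1} : Set ℝ) →
    ∀ δ : ℝ, 0 < |δ| → |δ| ≤ min (min ϑ (T - ϑ)) 1 / 4 →
      |f (u - δ) - f u - δ * g u| ≤ |δ| * ((3 * α + 3) * ww T α u) := by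
  intro u hu1 hu2 huB δ hδ0 hδε
  have hα : 0 < α := by linarith
  simp only [Set.mem_insert_iff, Set.mem_singleton_iff, not_or] at huB
  obtain ⟨hb1, hb2, hb3, hb4, hb5⟩ := huB
  have hδϑ : |δ| ≤ ϑ / 4 := by
    have h1 := min_le_left (min ϑ (T - ϑ)) 1
    have h2 := min_le_left ϑ (T - ϑ); linarith
  have hδT : |δ| ≤ (T - ϑ) / 4 := by
    have h1 := min_le_left (min ϑ (T - ϑ)) 1
    have h2 := min_le_right ϑ (T - ϑ); linarith
  have hδ1 : |δ| ≤ 1 / 4 := by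
    have h1 := min_le_right (min ϑ (T - ϑ)) 1; linarith
  have hδl := neg_abs_le δ
  have hδr := le_abs_self δ
  have hu_w1 : -T < u := by linarith
  have hu_w2 : u < T := by linarith
  have huδ1 : -T < u - δ := by linarith
  have huδ2 : u - δ < T := by linarith
  obtain ⟨du, hdu0, hdu_le1, hdu_le2, hdu_le3, hdu_le4, hdu_le5, hchoice⟩ :
      ∃ du : ℝ, 0 < du ∧ du ≤ |u - (1 - T)| ∧ du ≤ |u + 1| ∧ du ≤ |u| ∧ du ≤ |u - 1| ∧
        du ≤ |u - (T - 1)| ∧ (du = |u - (1 - T)| ∨ du = |u + 1| ∨ du = |u| ∨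
          du = |u - 1| ∨ du = |u - (T - 1)|) := by
    refine ⟨min (min (min (min |u - (1 - T)| |u + 1|) |u|) |u - 1|) |u - (T - 1)|,
      ?_, ?_, ?_, ?_, ?_, ?_, ?_⟩
    · have hd1p : 0 < |u - (1 - T)| := abs_pos.2 (sub_ne_zero.2 hb1)
      have hd2p : 0 < |u + 1| := abs_pos.2 (by intro hc; exact hb2 (by linarith))
      have hd3p : 0 < |u| := abs_pos.2 hb3
      have hd4p : 0 < |u - 1| := abs_pos.2 (sub_ne_zero.2 hb4)
      have hd5p : 0 < |u - (T - 1)| := abs_pos.2 (sub_ne_zero.2 hb5)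
      exact lt_min (lt_min (lt_min (lt_min hd1p hd2p) hd3p) hd4p) hd5p
    · exact (min_le_left _ _).trans ((min_le_left _ _).trans
        ((min_le_left _ _).trans (min_le_left _ _)))
    · exact (min_le_left _ _).trans ((min_le_left _ _).trans
        ((min_le_left _ _).trans (min_le_right _ _)))
    · exact (min_le_left _ _).trans ((min_le_left _ _).trans (min_le_right _ _))
    · exact (min_le_left _ _).trans (min_le_right _ _)
    · exact min_le_right _ _
    · rcases min_choice (min (min (min |u - (1 - T)| |u + 1|) |u|) |u - 1|) |u - (T - 1)|
        with h | h
      · rw [h]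
        rcases min_choice (min (min |u - (1 - T)| |u + 1|) |u|) |u - 1| with h' | h'
        · rw [h']
          rcases min_choice (min |u - (1 - T)| |u + 1|) |u| with h'' | h''
          · rw [h'']
            rcases min_choice |u - (1 - T)| |u + 1| with h''' | h''' <;> rw [h''']
            · exact Or.inl rfl
            · exact Or.inr (Or.inl rfl)
          · rw [h'']; exact Or.inr (Or.inr (Or.inl rfl))
        · rw [h']; exact Or.inr (Or.inr (Or.inr (Or.inl rfl)))
      · rw [h]; exact Or.inr (Or.inr (Or.inr (Or.inr rfl)))
  set W := ww T α u with hW_def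
  have hpn1 := psi_nonneg α (u - (1 - T)); have hpn2 := psi_nonneg α (u + 1)
  have hpn3 := psi_nonneg α u; have hpn4 := psi_nonneg α (u - 1)
  have hpn5 := psi_nonneg α (u - (T - 1))
  have hww1 : 1 ≤ W := by
    have h := one_le_psi α hb3
    rw [hW_def]; unfold ww; linarith
  have hW0 : 0 ≤ W := by linarith
  have hgbd : |g u| ≤ α * W := g_bound hT hα hgper hg1 hg2 hg0 hg3 u ⟨hu_w1, hu_w2⟩
  have htri : |f (u - δ) - f u - δ * g u| ≤ |f (u - δ) - f u| + |δ| * |g u| := by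
    have h := abs_add_le (f (u - δ) - f u) (-(δ * g u))
    rw [abs_neg, abs_mul] at h
    simpa [sub_eq_add_neg] using h
  rcases le_or_gt |δ| (du / 2) with hcase | hcase
  · -- Case A: MVT / same region
    have hfinal : ∀ hfd : |f (u - δ) - f u| ≤ 2 * α * W * |δ|,
        |f (u - δ) - f u - δ * g u| ≤ |δ| * ((3 * α + 3) * W) := by
      intro hfd
      have h1 : |δ| * |g u| ≤ |δ| * (α * W) :=
        mul_le_mul_of_nonneg_left hgbd (abs_nonneg δ)
      nlinarith [mul_nonneg (abs_nonneg δ) hW0]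
    rcases lt_trichotomy u 0 with hu0 | hu0 | hu0
    · rcases lt_or_ge (-1:ℝ) u with h1 | h1
      · -- u ∈ (-1,0)
        apply hfinal
        have huabs : |u| ≤ 1 := by rw [abs_of_neg hu0]; linarith
        have hd2eq : |u + 1| = 1 - |u| := by
          rw [abs_of_pos (by linarith : (0:ℝ) < u + 1), abs_of_neg hu0]; ring
        have hd2le : du ≤ 1 - |u| := by rw [← hd2eq]; exact hdu_le2
        have habsδ : |u - δ| ≤ |u| + |δ| := by
          rw [sub_eq_add_neg]
          exact (abs_add_le u (-δ)).trans (by rw [abs_neg])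
        have hu0' : 0 ≤ |u| := abs_nonneg u
        have huδabs : |u - δ| ≤ 1 := by linarith
        rw [hf1 u huabs, hf1 (u - δ) huδabs]
        have hWa : (1 - |u|) ^ (min (α - 1) 0) ≤ W := by
          have hpe : psi α (u + 1) = (1 - |u|) ^ (min (α - 1) 0) :=
            psi_eq (u + 1) hd2eq (by linarith)
          rw [← hpe, hW_def]; unfold ww; linarith
        have hba : |1 - |u - δ| - (1 - |u|)| ≤ |δ| := by
          have h := abs_abs_sub_abs_le_abs_sub (u - δ) u
          rw [show u - δ - u = -δ by ring, abs_neg] at h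
          calc |1 - |u - δ| - (1 - |u|)| = |(|u - δ|) - (|u|)| := by
                rw [show 1 - |u - δ| - (1 - |u|) = -((|u - δ|) - |u|) by ring, abs_neg]
            _ ≤ |δ| := h
        exact sl_step hα2 (by linarith : (0:ℝ) < 1 - |u|) (by linarith)
          (by linarith) (by linarith [abs_nonneg (u - δ)]) (by linarith) hba hWa
      · have h1' : u < -1 := lt_of_le_of_ne h1 hb2
        rcases lt_or_ge (1 - T) u with h2 | h2
        · -- zero region (1-T, -1)
          have hd2eq : |u + 1| = -(u + 1) := abs_of_neg (by linarith)
          have hd1eq : |u - (1 - T)| = u - (1 - T) := abs_of_pos (by linarith)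
          have hz1 : f u = 0 := f_zero_left hT hfper hf2 u ⟨h2.le, h1'.le⟩
          have hz2 : f (u - δ) = 0 := by
            apply f_zero_left hT hfper hf2
            have ha : du ≤ u - (1 - T) := by rw [← hd1eq]; exact hdu_le1
            have hb : du ≤ -(u + 1) := by rw [← hd2eq]; exact hdu_le2
            exact ⟨by linarith, by linarith⟩
          have hzg : g u = 0 := g_zero_left hgper hg3 u ⟨h2.le, h1'.le⟩
          rw [hz1, hz2, hzg]
          simp only [mul_zero, sub_zero, sub_self, abs_zero]
          exact mul_nonneg (abs_nonneg δ) (mul_nonneg (by linarith) hW0)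
        · have h2' : u < 1 - T := lt_of_le_of_ne h2 hb1
          -- region (-T, 1-T)
          apply hfinal
          have hd1eq : |u - (1 - T)| = 1 - (u + T) := by
            rw [abs_of_neg (by linarith : u - (1 - T) < 0)]; ring
          have hd1le : du ≤ 1 - (u + T) := by rw [← hd1eq]; exact hdu_le1
          have hmem1 : u ∈ Icc (-T) (1 - T) := ⟨hu_w1.le, h2'.le⟩
          have hmem2 : u - δ ∈ Icc (-T) (1 - T) := ⟨by linarith, by linarith⟩
          rw [f_left hfper hf1 u hmem1, f_left hfper hf1 (u - δ) hmem2]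
          have hWa : (1 - (u + T)) ^ (min (α - 1) 0) ≤ W := by
            have hpe : psi α (u - (1 - T)) = (1 - (u + T)) ^ (min (α - 1) 0) :=
              psi_eq _ hd1eq (by linarith)
            rw [← hpe, hW_def]; unfold ww; linarith
          have hba : |1 - (u - δ + T) - (1 - (u + T))| ≤ |δ| := by
            rw [show 1 - (u - δ + T) - (1 - (u + T)) = δ by ring]
          exact sl_step hα2 (by linarith) (by linarith) (by linarith)
            (by linarith) (by linarith) hba hWa
    · exact absurd hu0 hb3
    · rcases lt_or_ge u 1 with h1 | h1
      · -- u ∈ (0,1)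
        apply hfinal
        have huabs : |u| ≤ 1 := by rw [abs_of_pos hu0]; linarith
        have hd4eq : |u - 1| = 1 - |u| := by
          rw [abs_of_neg (by linarith : u - 1 < 0), abs_of_pos hu0]; ring
        have hd4le : du ≤ 1 - |u| := by rw [← hd4eq]; exact hdu_le4
        have habsδ : |u - δ| ≤ |u| + |δ| := by
          rw [sub_eq_add_neg]
          exact (abs_add_le u (-δ)).trans (by rw [abs_neg])
        have hu0' : 0 ≤ |u| := abs_nonneg u
        have huδabs : |u - δ| ≤ 1 := by linarith
        rw [hf1 u huabs, hf1 (u - δ) huδabs]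
        have hWa : (1 - |u|) ^ (min (α - 1) 0) ≤ W := by
          have hpe : psi α (u - 1) = (1 - |u|) ^ (min (α - 1) 0) :=
            psi_eq (u - 1) hd4eq (by linarith)
          rw [← hpe, hW_def]; unfold ww; linarith
        have hba : |1 - |u - δ| - (1 - |u|)| ≤ |δ| := by
          have h := abs_abs_sub_abs_le_abs_sub (u - δ) u
          rw [show u - δ - u = -δ by ring, abs_neg] at h
          calc |1 - |u - δ| - (1 - |u|)| = |(|u - δ|) - (|u|)| := by
                rw [show 1 - |u - δ| - (1 - |u|) = -((|u - δ|) - |u|) by ring, abs_neg]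
            _ ≤ |δ| := h
        exact sl_step hα2 (by linarith : (0:ℝ) < 1 - |u|) (by linarith)
          (by linarith) (by linarith [abs_nonneg (u - δ)]) (by linarith) hba hWa
      · have h1' : 1 < u := lt_of_le_of_ne h1 (Ne.symm hb4)
        rcases lt_or_ge u (T - 1) with h2 | h2
        · -- zero region (1, T-1)
          have hd4eq : |u - 1| = u - 1 := abs_of_pos (by linarith)
          have hd5eq : |u - (T - 1)| = T - 1 - u := by
            rw [abs_of_neg (by linarith : u - (T - 1) < 0)]; ring
          have hz1 : f u = 0 := hf2 u ⟨h1'.le, h2.le⟩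
          have hz2 : f (u - δ) = 0 := by
            apply hf2
            have ha : du ≤ u - 1 := by rw [← hd4eq]; exact hdu_le4
            have hb : du ≤ T - 1 - u := by rw [← hd5eq]; exact hdu_le5
            exact ⟨by linarith, by linarith⟩
          have hzg : g u = 0 := hg3 u ⟨h1'.le, h2.le⟩
          rw [hz1, hz2, hzg]
          simp only [mul_zero, sub_zero, sub_self, abs_zero]
          exact mul_nonneg (abs_nonneg δ) (mul_nonneg (by linarith) hW0)
        · have h2' : T - 1 < u := lt_of_le_of_ne h2 (Ne.symm hb5)
          -- region (T-1, T)
          apply hfinal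
          have hd5eq : |u - (T - 1)| = 1 - (T - u) := by
            rw [abs_of_pos (by linarith : (0:ℝ) < u - (T - 1))]; ring
          have hd5le : du ≤ 1 - (T - u) := by rw [← hd5eq]; exact hdu_le5
          have hmem1 : u ∈ Icc (T - 1) T := ⟨h2'.le, by linarith⟩
          have hmem2 : u - δ ∈ Icc (T - 1) T := ⟨by linarith, by linarith⟩
          rw [f_right hfper hf1 u hmem1, f_right hfper hf1 (u - δ) hmem2]
          have hWa : (1 - (T - u)) ^ (min (α - 1) 0) ≤ W := by
            have hpe : psi α (u - (T - 1)) = (1 - (T - u)) ^ (min (α - 1) 0) :=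
              psi_eq _ hd5eq (by linarith)
            rw [← hpe, hW_def]; unfold ww; linarith
          have hba : |1 - (T - (u - δ)) - (1 - (T - u))| ≤ |δ| := by
            rw [show 1 - (T - (u - δ)) - (1 - (T - u)) = -δ by ring, abs_neg]
          exact sl_step hα2 (by linarith) (by linarith) (by linarith)
            (by linarith) (by linarith) hba hWa
  · -- Case B: Hoelder
    have hfm := f_mod hT hα hfper hf1 hf2 u ⟨by linarith, by linarith⟩ (u - δ)
      ⟨by linarith, by linarith⟩
    rw [show u - δ - u = -δ by ring, abs_neg] at hfm
    have hpow : |δ| ^ α = |δ| * |δ| ^ (α - 1) := by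
      conv_lhs => rw [show α = 1 + (α - 1) by ring]
      rw [Real.rpow_add hδ0, Real.rpow_one]
    have hpw : |δ| ^ (α - 1) ≤ 2 * W := by
      rcases le_or_gt 1 α with hge | hlt
      · have h1 : |δ| ^ (α - 1) ≤ 1 :=
          Real.rpow_le_one (abs_nonneg δ) (by linarith) (by linarith)
        linarith
      · have hmin : min (α - 1) 0 = α - 1 := min_eq_left (by linarith)
        have hdu2δ : du ≤ 2 * |δ| := by linarith
        have hdu1 : du < 1 := by linarith
        have h2d : (2 * |δ|) ^ (α - 1) ≤ du ^ (α - 1) :=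
          Real.rpow_le_rpow_of_nonpos hdu0 hdu2δ (by linarith)
        have hmulp : (2 * |δ|) ^ (α - 1) = 2 ^ (α - 1) * |δ| ^ (α - 1) :=
          Real.mul_rpow (by norm_num) (abs_nonneg δ)
        have h2pow : (1:ℝ)/2 ≤ (2:ℝ) ^ (α - 1) := by
          have h := Real.rpow_le_rpow_of_exponent_le one_le_two
            (by linarith : (-1:ℝ) ≤ α - 1)
          rwa [Real.rpow_neg_one, show ((2:ℝ))⁻¹ = 1/2 by norm_num] at h
        have hδd : |δ| ^ (α - 1) ≤ 2 * du ^ (α - 1) := by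
          nlinarith [Real.rpow_nonneg (abs_nonneg δ) (α - 1)]
        have hduW : du ^ (α - 1) ≤ W := by
          have hgen : ∀ x : ℝ, du = |x| → du ^ (α - 1) ≤ psi α x := by
            intro x hx
            rw [psi, ← hx, min_eq_right hdu1.le, hmin]
          rcases hchoice with h | h | h | h | h
          · have := hgen (u - (1 - T)) h
            rw [hW_def]; unfold ww; linarith
          · have := hgen (u + 1) h
            rw [hW_def]; unfold ww; linarith
          · have := hgen u h
            rw [hW_def]; unfold ww; linarith
          · have := hgen (u - 1) h
            rw [hW_def]; unfold ww; linarith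
          · have := hgen (u - (T - 1)) h
            rw [hW_def]; unfold ww; linarith
        nlinarith [Real.rpow_nonneg hdu0.le (α - 1)]
    calc |f (u - δ) - f u - δ * g u| ≤ |f (u - δ) - f u| + |δ| * |g u| := htri
      _ ≤ (α * |δ| + |δ| ^ α) + |δ| * (α * W) :=
          add_le_add hfm (mul_le_mul_of_nonneg_left hgbd (abs_nonneg δ))
      _ ≤ |δ| * ((3 * α + 3) * W) := by
          rw [hpow]
          nlinarith [mul_nonneg (mul_nonneg hα.le (abs_nonneg δ)) (sub_nonneg.2 hww1),
            mul_le_mul_of_nonneg_left hpw (abs_nonneg δ),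
            mul_nonneg (abs_nonneg δ) hW0]

end KEY



lemma intInt_abs_rpow {r : ℝ} (hr : -1 < r) (a b : ℝ) :
    IntervalIntegrable (fun x => |x| ^ r) volume a b := by
  suffices h : ∀ c : ℝ, IntervalIntegrable (fun x => |x| ^ r) volume 0 c by
    exact ((h a).symm).trans (h b)
  intro c
  rcases le_total 0 c with hc | hc
  · apply (intervalIntegrable_rpow' hr (a := 0) (b := c)).congr
    rw [uIoc_of_le hc]
    intro x hx
    show x ^ r = |x| ^ r
    rw [abs_of_pos hx.1]
  · have h1 : IntervalIntegrable (fun x => (-x) ^ r) volume 0 (-(-c)) := by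
      simpa using (IntervalIntegrable.iff_comp_neg).mp
        (intervalIntegrable_rpow' hr (a := -0) (b := -c))
    apply (by simpa using h1 : IntervalIntegrable (fun x => (-x) ^ r) volume 0 c).congr
    rw [uIoc_of_ge hc]
    intro x hx
    show (-x) ^ r = |x| ^ r
    rw [abs_of_nonpos hx.2]

lemma psi_measurable (α : ℝ) : Measurable (psi α) := by
  unfold psi
  exact (measurable_const.min measurable_abs).pow measurable_const

lemma psi_le (α x : ℝ) : psi α x ≤ 1 + |x| ^ (min (α - 1) 0) := by
  have h0 : 0 ≤ |x| ^ (min (α - 1) 0) := Real.rpow_nonneg (abs_nonneg x) _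
  rcases le_total 1 |x| with h | h
  · rw [psi, min_eq_left h, Real.one_rpow]; linarith
  · rw [psi, min_eq_right h]; linarith

lemma psi_sq_intInt {α : ℝ} (hα2 : 1/2 < α) (c a b : ℝ) :
    IntervalIntegrable (fun x => psi α (x - c) ^ 2) volume a b := by
  have hmeas : Measurable fun x => psi α (x - c) ^ 2 :=
    ((psi_measurable α).comp (measurable_id.sub measurable_const)).pow_const 2
  rcases le_or_gt 1 α with h1 | h1
  · have hconst : (fun x => psi α (x - c) ^ 2) = fun _ => (1:ℝ) := by
      funext x
      rw [psi, min_eq_right (show (0:ℝ) ≤ α - 1 by linarith), Real.rpow_zero, one_pow]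
    rw [hconst]
    exact intervalIntegrable_const
  · have he : min (α - 1) 0 = α - 1 := min_eq_left (by linarith)
    have hr1 : (-1:ℝ) < α - 1 := by linarith
    have hr2 : (-1:ℝ) < 2 * (α - 1) := by linarith
    have hint : IntervalIntegrable
        (fun x => 1 + 2 * |x - c| ^ (α - 1) + |x - c| ^ (2 * (α - 1))) volume a b := by
      have i1 : IntervalIntegrable (fun x => |x - c| ^ (α - 1)) volume a b := by
        have := (intInt_abs_rpow hr1 (a - c) (b - c)).comp_sub_right c
        simpa using this
      have i2 : IntervalIntegrable (fun x => |x - c| ^ (2 * (α - 1))) volume a b := by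
        have := (intInt_abs_rpow hr2 (a - c) (b - c)).comp_sub_right c
        simpa using this
      exact (intervalIntegrable_const.add (i1.const_mul 2)).add i2
    apply hint.mono_fun hmeas.aestronglyMeasurable
    filter_upwards with x
    have hy : 0 ≤ |x - c| ^ (α - 1) := Real.rpow_nonneg (abs_nonneg _) _
    have hsq : (|x - c| ^ (α - 1)) ^ 2 = |x - c| ^ (2 * (α - 1)) := by
      rw [mul_comm, Real.rpow_mul (abs_nonneg _), ← Real.rpow_natCast (|x - c| ^ (α - 1)) 2]
      norm_num
    have hb := psi_le α (x - c)
    rw [he] at hb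
    have hp0 := psi_nonneg α (x - c)
    have : psi α (x - c) ^ 2 ≤ 1 + 2 * |x - c| ^ (α - 1) + |x - c| ^ (2 * (α - 1)) := by
      nlinarith
    simp only [Real.norm_eq_abs]
    rw [abs_of_nonneg (by positivity), abs_of_nonneg (by nlinarith)]
    exact this

lemma ww_shift_measurable (T α ϑ : ℝ) : Measurable fun t => ww T α (t - ϑ) := by
  unfold ww
  have hs : Measurable fun t : ℝ => t - ϑ := measurable_id.sub measurable_const
  have m : ∀ c : ℝ, Measurable fun t : ℝ => psi α (t - ϑ - c) := fun c =>
    (psi_measurable α).comp ((hs.sub measurable_const))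
  have m2 : Measurable fun t : ℝ => psi α (t - ϑ + 1) :=
    (psi_measurable α).comp ((hs.add measurable_const))
  have m3 : Measurable fun t : ℝ => psi α (t - ϑ) := (psi_measurable α).comp hs
  exact ((((m (1 - T)).add m2).add m3).add (m 1)).add (m (T - 1))

lemma ww_sq_intInt {T α : ℝ} (hα2 : 1/2 < α) (ϑ a b : ℝ) :
    IntervalIntegrable (fun t => ww T α (t - ϑ) ^ 2) volume a b := by
  have hmeas : Measurable fun t => ww T α (t - ϑ) ^ 2 :=
    (ww_shift_measurable T α ϑ).pow_const 2
  have hint : IntervalIntegrable (fun t =>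
      5 * (psi α (t - (ϑ + (1 - T))) ^ 2 + psi α (t - (ϑ - 1)) ^ 2 + psi α (t - ϑ) ^ 2 +
        psi α (t - (ϑ + 1)) ^ 2 + psi α (t - (ϑ + (T - 1))) ^ 2)) volume a b := by
    exact (((((psi_sq_intInt hα2 (ϑ + (1 - T)) a b).add
      (psi_sq_intInt hα2 (ϑ - 1) a b)).add
      (psi_sq_intInt hα2 ϑ a b)).add
      (psi_sq_intInt hα2 (ϑ + 1) a b)).add
      (psi_sq_intInt hα2 (ϑ + (T - 1)) a b)).const_mul 5
  apply hint.mono_fun hmeas.aestronglyMeasurable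
  filter_upwards with t
  have e1 : t - ϑ - (1 - T) = t - (ϑ + (1 - T)) := by ring
  have e2 : t - ϑ + 1 = t - (ϑ - 1) := by ring
  have e3 : t - ϑ - 1 = t - (ϑ + 1) := by ring
  have e4 : t - ϑ - (T - 1) = t - (ϑ + (T - 1)) := by ring
  set p1 := psi α (t - (ϑ + (1 - T))) with hp1
  set p2 := psi α (t - (ϑ - 1)) with hp2
  set p3 := psi α (t - ϑ) with hp3
  set p4 := psi α (t - (ϑ + 1)) with hp4
  set p5 := psi α (t - (ϑ + (T - 1))) with hp5
  have hww : ww T α (t - ϑ) = p1 + p2 + p3 + p4 + p5 := by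
    rw [ww, e1, e2, e3, e4]
  have h1 := psi_nonneg α (t - (ϑ + (1 - T)))
  have h2 := psi_nonneg α (t - (ϑ - 1))
  have h3 := psi_nonneg α (t - ϑ)
  have h4 := psi_nonneg α (t - (ϑ + 1))
  have h5 := psi_nonneg α (t - (ϑ + (T - 1)))
  rw [← hp1] at h1; rw [← hp2] at h2; rw [← hp3] at h3
  rw [← hp4] at h4; rw [← hp5] at h5
  simp only [Real.norm_eq_abs, hww]
  rw [abs_of_nonneg (by positivity), abs_of_nonneg (by positivity)]
  nlinarith [sq_nonneg (p1 - p2), sq_nonneg (p1 - p3), sq_nonneg (p1 - p4),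
    sq_nonneg (p1 - p5), sq_nonneg (p2 - p3), sq_nonneg (p2 - p4), sq_nonneg (p2 - p5),
    sq_nonneg (p3 - p4), sq_nonneg (p3 - p5), sq_nonneg (p4 - p5)]



noncomputable def gexp (T α x : ℝ) : ℝ :=
  if 0 < x ∧ x < 1 then α * (1 - x) ^ (α - 1)
  else if -1 < x ∧ x < 0 then -(α * (1 + x) ^ (α - 1))
  else if T - 1 < x then -(α * (1 + (x - T)) ^ (α - 1))
  else if x < 1 - T then α * (1 - (x + T)) ^ (α - 1)
  else 0

lemma gexp_measurable (T α : ℝ) : Measurable (gexp T α) := by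
  unfold gexp
  have m1 : Measurable fun x : ℝ => α * (1 - x) ^ (α - 1) :=
    measurable_const.mul ((measurable_const.sub measurable_id).pow measurable_const)
  have m2 : Measurable fun x : ℝ => -(α * (1 + x) ^ (α - 1)) :=
    (measurable_const.mul ((measurable_const.add measurable_id).pow measurable_const)).neg
  have m3 : Measurable fun x : ℝ => -(α * (1 + (x - T)) ^ (α - 1)) :=
    (measurable_const.mul ((measurable_const.add
      (measurable_id.sub measurable_const)).pow measurable_const)).neg
  have m4 : Measurable fun x : ℝ => α * (1 - (x + T)) ^ (α - 1) :=
    measurable_const.mul ((measurable_const.sub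
      (measurable_id.add measurable_const)).pow measurable_const)
  refine Measurable.ite ?_ m1 (Measurable.ite ?_ m2 (Measurable.ite ?_ m3
    (Measurable.ite ?_ m4 measurable_const)))
  · exact (measurableSet_Ioo : MeasurableSet (Ioo (0:ℝ) 1))
  · exact (measurableSet_Ioo : MeasurableSet (Ioo (-1:ℝ) 0))
  · exact (measurableSet_Ioi : MeasurableSet (Ioi (T - 1)))
  · exact (measurableSet_Iio : MeasurableSet (Iio (1 - T)))

section GE

variable {T α : ℝ} {g : ℝ → ℝ}

lemma g_exp_eq (hT : 2 < T) (hgper : Function.Periodic g T)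
    (hg1 : ∀ x ∈ Set.Ioo (0:ℝ) 1, g x = α * (1 - x) ^ (α - 1))
    (hg2 : ∀ x ∈ Set.Ioo (-1:ℝ) 0, g x = -(α * (1 + x) ^ (α - 1)))
    (hg0 : g 0 = 0)
    (hg3 : ∀ x ∈ Set.Icc (1:ℝ) (T - 1), g x = 0) :
    ∀ x ∈ Ioo (-T) T, g x = gexp T α x := by
  intro x hx
  unfold gexp
  rcases lt_trichotomy x 0 with hx0 | rfl | hx0
  · rw [if_neg (by rintro ⟨h, _⟩; linarith)]
    rcases lt_or_ge (-1:ℝ) x with h1 | h1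
    · rw [if_pos ⟨h1, hx0⟩]
      exact hg2 x ⟨h1, hx0⟩
    · rw [if_neg (by rintro ⟨h, _⟩; linarith)]
      rw [if_neg (by intro h; linarith)]
      rcases le_or_gt (1 - T) x with h2 | h2
      · rw [if_neg (by intro h; linarith)]
        exact g_zero_left hgper hg3 x ⟨h2, h1⟩
      · rw [if_pos h2]
        exact g_left hgper hg1 x ⟨hx.1, h2⟩
  · rw [if_neg (by rintro ⟨h, _⟩; linarith), if_neg (by rintro ⟨_, h⟩; linarith),
      if_neg (by intro h; linarith), if_neg (by intro h; linarith)]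
    exact hg0
  · rcases lt_or_ge x 1 with h1 | h1
    · rw [if_pos ⟨hx0, h1⟩]
      exact hg1 x ⟨hx0, h1⟩
    · rw [if_neg (by rintro ⟨_, h⟩; linarith), if_neg (by rintro ⟨_, h⟩; linarith)]
      rcases le_or_gt x (T - 1) with h2 | h2
      · rw [if_neg (by intro h; linarith), if_neg (by intro h; linarith)]
        exact hg3 x ⟨h1, h2⟩
      · rw [if_pos h2]
        exact g_right hgper hg2 x ⟨h2, hx.2⟩

end GE

lemma sSup_eq_of_dense {A B : Set ℝ} (hBA : B ⊆ A) (hAB : A ⊆ closure B) :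
    sSup A = sSup B := by
  rcases B.eq_empty_or_nonempty with rfl | hBne
  · rw [closure_empty] at hAB
    rw [Set.subset_empty_iff.mp hAB]
  · by_cases hbd : BddAbove A
    · have hbdB : BddAbove B := hbd.mono hBA
      apply le_antisymm
      · apply csSup_le (hBne.mono hBA)
        intro a ha
        have h1 : closure B ⊆ Iic (sSup B) :=
          closure_minimal (fun b hb => le_csSup hbdB hb) isClosed_Iic
        exact h1 (hAB ha)
      · exact csSup_le_csSup hbd hBne hBA
    · have hbdB : ¬ BddAbove B := by
        rintro ⟨c, hc⟩
        apply hbd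
        refine ⟨c, fun a ha => ?_⟩
        have h1 : closure B ⊆ Iic c := closure_minimal (fun b hb => hc hb) isClosed_Iic
        exact h1 (hAB ha)
      rw [csSup_of_not_bddAbove hbd, csSup_of_not_bddAbove hbdB]

lemma iSup_subtype_eq_sSup_image {P : ℝ → Prop} (F : ℝ → ℝ) :
    (⨆ ζ : {ζ : ℝ // P ζ}, F ζ.1) = sSup (F '' {ζ | P ζ}) := by
  rw [iSup, Set.image_eq_range]
  rfl



noncomputable def Fc (T α : ℝ) : ℝ → ℝ := fun x => (max (1 - dd T x) 0) ^ α

noncomputable def qfun (f g : ℝ → ℝ) (ϑ t ζ : ℝ) : ℝ :=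
  |f (t - ζ) - f (t - ϑ) - (ζ - ϑ) * g (t - ϑ)| / |ζ - ϑ|

lemma qfun_nonneg (f g : ℝ → ℝ) (ϑ t ζ : ℝ) : 0 ≤ qfun f g ϑ t ζ :=
  div_nonneg (abs_nonneg _) (abs_nonneg _)

section QF

variable {T α : ℝ} {f g : ℝ → ℝ}

lemma f_eq_Fc (hT : 2 < T) (hα : 0 < α) (hfper : Function.Periodic f T)
    (hf1 : ∀ x : ℝ, |x| ≤ 1 → f x = (1 - |x|) ^ α)
    (hf2 : ∀ x ∈ Set.Icc (1:ℝ) (T - 1), f x = 0) :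
    ∀ x ∈ Icc (-T) T, f x = Fc T α x :=
  f_eq_F hT hα hfper hf1 hf2

lemma Fc_continuous (T : ℝ) {α : ℝ} (hα : 0 < α) : Continuous (Fc T α) :=
  continuous_F T hα

lemma qfun_contAt {ϑ : ℝ} (hT : 2 < T) (hϑ0 : 0 < ϑ) (hϑT : ϑ < T)
    (hcont : ∀ x ∈ Ioo (-T) T, ContinuousAt f x)
    {t ζ : ℝ} (ht : t ∈ Icc (0:ℝ) T) (hζ : ζ ∈ Ioo (0:ℝ) T) (hζϑ : ζ ≠ ϑ) :
    ContinuousAt (qfun f g ϑ t) ζ := by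
  unfold qfun
  apply ContinuousAt.div
  · apply ContinuousAt.abs
    apply ContinuousAt.sub
    apply ContinuousAt.sub
    · have h1 : ContinuousAt (fun ζ : ℝ => t - ζ) ζ :=
        (continuous_const.sub continuous_id).continuousAt
      exact (hcont (t - ζ) ⟨by linarith [ht.1, hζ.2], by linarith [ht.2, hζ.1]⟩).comp h1
    · exact continuousAt_const
    · exact ((continuous_id.sub continuous_const).continuousAt).mul continuousAt_const
  · exact ((continuous_id.sub continuous_const).abs).continuousAt
  · exact ne_of_gt (abs_pos.2 (sub_ne_zero.2 hζϑ))

end QF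

lemma qF_measurable (T : ℝ) {α : ℝ} (hα : 0 < α) (ϑ ζ : ℝ) :
    Measurable fun t => qfun (Fc T α) (gexp T α) ϑ t ζ := by
  unfold qfun
  have hFc := (Fc_continuous T hα).measurable
  have h1 : Measurable fun t : ℝ => Fc T α (t - ζ) :=
    hFc.comp (measurable_id.sub measurable_const)
  have h2 : Measurable fun t : ℝ => Fc T α (t - ϑ) :=
    hFc.comp (measurable_id.sub measurable_const)
  have h3 : Measurable fun t : ℝ => (ζ - ϑ) * gexp T α (t - ϑ) :=
    measurable_const.mul ((gexp_measurable T α).comp (measurable_id.sub measurable_const))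
  exact (((h1.sub h2).sub h3).abs).div_const _

noncomputable def GG (T α ϑ : ℝ) : ℝ → ℝ := fun t => (3 * α + 3) * ww T α (t - ϑ)

lemma GG_nonneg {T α : ℝ} (hα : 0 < α) (ϑ t : ℝ) : 0 ≤ GG T α ϑ t :=
  mul_nonneg (by linarith) (ww_nonneg T α (t - ϑ))

lemma GG_measurable (T α ϑ : ℝ) : Measurable (GG T α ϑ) :=
  (ww_shift_measurable T α ϑ).const_mul _

lemma GG_sq_integrable {T α : ℝ} (hT : 2 < T) (hα2 : 1/2 < α) (ϑ : ℝ) :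
    Integrable (fun t => GG T α ϑ t ^ 2) (volume.restrict (Icc (0:ℝ) T)) := by
  have h1 : IntervalIntegrable (fun t => GG T α ϑ t ^ 2) volume 0 T := by
    have h2 := (ww_sq_intInt (T := T) hα2 ϑ 0 T).const_mul ((3 * α + 3) ^ 2)
    have h3 : (fun t => GG T α ϑ t ^ 2) =
        fun t => (3 * α + 3) ^ 2 * ww T α (t - ϑ) ^ 2 := by
      funext t; rw [GG, mul_pow]
    rw [h3]
    exact h2
  exact (intervalIntegrable_iff_integrableOn_Icc_of_le (by linarith)).mp h1

lemma GG_mem {T α : ℝ} (hT : 2 < T) (hα2 : 1/2 < α) (ϑ : ℝ) :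
    MemLp (GG T α ϑ) 2 (volume.restrict (Icc (0:ℝ) T)) :=
  (memLp_two_iff_integrable_sq
    ((GG_measurable T α ϑ).aestronglyMeasurable)).mpr (GG_sq_integrable hT hα2 ϑ)


end AlphaSignalAux

open AlphaSignalAux

set_option maxHeartbeats 1000000 in
/-- α-signal setting with `α > 1/2`. Fix `ϑ ∈ (0,T)`. Then
`g_α(·-ϑ) ∈ L²([0,T],dt)`; moreover, with
`ρ_ε(ϑ,t) := sup_{ζ∈(0,T), 0<|ζ-ϑ|<ε} |f_α(t-ζ)-f_α(t-ϑ)-(ζ-ϑ)g_α(t-ϑ)|/|ζ-ϑ|`,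
there is `ε(ϑ) > 0` such that `ρ_ε(ϑ,·) ∈ L²([0,T],dt)` for all `0 < ε ≤ ε(ϑ)`, and
`∫₀^T ρ_ε(ϑ,t)² dt → 0` as `ε ↓ 0`. -/
theorem alpha_signal_rho_memL2_and_tendsto_zero (T α : ℝ) (hT : 2 < T) (hα : 1 / 2 < α)
    (f g : ℝ → ℝ) (hfper : Function.Periodic f T) (hgper : Function.Periodic g T)
    (hf1 : ∀ x : ℝ, |x| ≤ 1 → f x = (1 - |x|) ^ α)
    (hf2 : ∀ x ∈ Set.Icc (1:ℝ) (T - 1), f x = 0)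
    (hg1 : ∀ x ∈ Set.Ioo (0:ℝ) 1, g x = α * (1 - x) ^ (α - 1))
    (hg2 : ∀ x ∈ Set.Ioo (-1:ℝ) 0, g x = -(α * (1 + x) ^ (α - 1)))
    (hg0 : g 0 = 0)
    (hg3 : ∀ x ∈ Set.Icc (1:ℝ) (T - 1), g x = 0)
    (ϑ : ℝ) (hϑ : ϑ ∈ Set.Ioo 0 T)
    (ρ : ℝ → ℝ → ℝ)
    (hρ : ∀ ε t, ρ ε t =
      ⨆ ζ : {ζ : ℝ // ζ ∈ Set.Ioo 0 T ∧ 0 < |ζ - ϑ| ∧ |ζ - ϑ| < ε},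
        |f (t - ζ.1) - f (t - ϑ) - (ζ.1 - ϑ) * g (t - ϑ)| / |ζ.1 - ϑ|) :
    MemLp (fun t => g (t - ϑ)) 2 (volume.restrict (Set.Icc 0 T)) ∧
    (∃ εϑ : ℝ, 0 < εϑ ∧ ∀ ε : ℝ, 0 < ε → ε ≤ εϑ →
      MemLp (ρ ε) 2 (volume.restrict (Set.Icc 0 T))) ∧
    Filter.Tendsto (fun ε => ∫ t in (0:ℝ)..T, (ρ ε t) ^ 2)
      (nhdsWithin 0 (Set.Ioi 0)) (nhds 0) := by
  classical
  obtain ⟨hϑ0, hϑT⟩ := hϑ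
  have hα0 : 0 < α := by linarith
  have hT0 : (0:ℝ) < T := by linarith
  set μ := volume.restrict (Set.Icc (0:ℝ) T) with hμ_def
  have hε₀pos : 0 < min (min ϑ (T - ϑ)) 1 / 4 :=
    div_pos (lt_min (lt_min hϑ0 (by linarith)) one_pos) (by norm_num)
  have hwindow : ∀ t ∈ Set.Icc (0:ℝ) T, t - ϑ ∈ Set.Ioo (-T) T := fun t ht =>
    ⟨by linarith [ht.1], by linarith [ht.2]⟩
  have hBnull : volume {t : ℝ | t - ϑ ∈ ({1 - T, -1, 0, 1, T - 1} : Set ℝ)} = 0 := by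
    have hsub : {t : ℝ | t - ϑ ∈ ({1 - T, -1, 0, 1, T - 1} : Set ℝ)} ⊆
        ({ϑ + (1 - T), ϑ + -1, ϑ + 0, ϑ + 1, ϑ + (T - 1)} : Set ℝ) := by
      intro t ht
      simp only [Set.mem_insert_iff, Set.mem_singleton_iff, Set.mem_setOf_eq] at ht ⊢
      rcases ht with h | h | h | h | h
      · exact Or.inl (by linarith)
      · exact Or.inr (Or.inl (by linarith))
      · exact Or.inr (Or.inr (Or.inl (by linarith)))
      · exact Or.inr (Or.inr (Or.inr (Or.inl (by linarith))))
      · exact Or.inr (Or.inr (Or.inr (Or.inr (by linarith))))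
    exact measure_mono_null hsub ((Set.toFinite _).countable.measure_zero _)
  have hgood : ∀ᵐ t ∂μ, t ∈ Set.Icc (0:ℝ) T ∧
      t - ϑ ∉ ({1 - T, -1, 0, 1, T - 1} : Set ℝ) := by
    have h1 : ∀ᵐ t ∂μ, t - ϑ ∉ ({1 - T, -1, 0, 1, T - 1} : Set ℝ) := by
      apply ae_restrict_of_ae
      have h2 := measure_eq_zero_iff_ae_notMem.mp hBnull
      exact h2.mono fun t ht => ht
    exact (ae_restrict_mem measurableSet_Icc).and h1
  have hkey := key hT hα hfper hgper hf1 hf2 hg1 hg2 hg0 hg3 hϑ0 hϑT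
  have hG_mem : MemLp (GG T α ϑ) 2 μ := GG_mem hT hα ϑ
  have hg_bd : ∀ t ∈ Set.Icc (0:ℝ) T, |g (t - ϑ)| ≤ GG T α ϑ t := by
    intro t ht
    have hb := g_bound hT hα0 hgper hg1 hg2 hg0 hg3 (t - ϑ) (hwindow t ht)
    have hw := ww_nonneg T α (t - ϑ)
    rw [GG]
    nlinarith
  have hg_aesm : AEStronglyMeasurable (fun t => g (t - ϑ)) μ := by
    apply (((gexp_measurable T α).comp
      (measurable_id.sub measurable_const)).aestronglyMeasurable).congr
    exact (ae_restrict_mem measurableSet_Icc).mono fun t ht =>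
      (g_exp_eq hT hgper hg1 hg2 hg0 hg3 (t - ϑ) (hwindow t ht)).symm
  have hmem_g : MemLp (fun t => g (t - ϑ)) 2 μ := by
    apply hG_mem.of_le hg_aesm
    exact (ae_restrict_mem measurableSet_Icc).mono fun t ht => by
      rw [Real.norm_eq_abs, Real.norm_eq_abs, abs_of_nonneg (GG_nonneg hα0 ϑ t)]
      exact hg_bd t ht
  have hper : ∀ ε : ℝ, 0 < ε → ε ≤ min (min ϑ (T - ϑ)) 1 / 4 →
      AEStronglyMeasurable (ρ ε) μ ∧
      (∀ᵐ t ∂μ, 0 ≤ ρ ε t ∧ ρ ε t ≤ GG T α ϑ t) := by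
    intro ε hεpos hεle
    set S : Set ℝ := {ζ : ℝ | ζ ∈ Set.Ioo 0 T ∧ 0 < |ζ - ϑ| ∧ |ζ - ϑ| < ε} with hS_def
    have hSopen : IsOpen S := by
      have hSeq : S = Set.Ioo 0 T ∩ ({ϑ}ᶜ ∩ Set.Ioo (ϑ - ε) (ϑ + ε)) := by
        ext ζ
        simp only [hS_def, Set.mem_setOf_eq, Set.mem_inter_iff, Set.mem_compl_iff,
          Set.mem_singleton_iff, Set.mem_Ioo]
        constructor
        · rintro ⟨h1, h2, h3⟩
          have h4 := abs_lt.mp h3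
          refine ⟨h1, fun hc => ?_, by linarith [h4.1], by linarith [h4.2]⟩
          rw [hc] at h2; simp at h2
        · rintro ⟨h1, h2, h3, h4⟩
          exact ⟨h1, abs_pos.2 (sub_ne_zero.2 h2), abs_lt.mpr ⟨by linarith, by linarith⟩⟩
      rw [hSeq]
      exact isOpen_Ioo.inter (isClosed_singleton.isOpen_compl.inter isOpen_Ioo)
    have hζ₀S : ϑ + min ε (T - ϑ) / 2 ∈ S := by
      have hm0 : 0 < min ε (T - ϑ) := lt_min hεpos (by linarith)
      have hm1 := min_le_left ε (T - ϑ)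
      have hm2 := min_le_right ε (T - ϑ)
      refine ⟨⟨by linarith, by linarith⟩, ?_, ?_⟩
      · rw [show ϑ + min ε (T - ϑ) / 2 - ϑ = min ε (T - ϑ) / 2 by ring,
          abs_of_pos (by linarith)]
        linarith
      · rw [show ϑ + min ε (T - ϑ) / 2 - ϑ = min ε (T - ϑ) / 2 by ring,
          abs_of_pos (by linarith)]
        linarith
    have hSne : S.Nonempty := ⟨_, hζ₀S⟩
    set Sq : Set ℝ := S ∩ Set.range ((↑) : ℚ → ℝ) with hSq_def
    have hSq_sub : Sq ⊆ S := Set.inter_subset_left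
    have hSq_count : Sq.Countable :=
      Set.Countable.mono Set.inter_subset_right (Set.countable_range _)
    have hdense : S ⊆ closure Sq := by
      intro ζ hζ
      rw [Metric.mem_closure_iff]
      intro r hr
      obtain ⟨r', hr', hball⟩ := Metric.isOpen_iff.mp hSopen ζ hζ
      have hpos : 0 < min r r' / 2 := by positivity
      obtain ⟨qq, hq1, hq2⟩ := exists_rat_btwn (lt_add_of_pos_right ζ hpos)
      have hm1 := min_le_left r r'
      have hm2 := min_le_right r r'
      have hqS : (qq:ℝ) ∈ S := by
        apply hball
        rw [Metric.mem_ball, Real.dist_eq, abs_of_pos (by linarith)]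
        linarith
      refine ⟨qq, ⟨hqS, ⟨qq, rfl⟩⟩, ?_⟩
      rw [Real.dist_eq, abs_of_neg (by linarith : ζ - (qq:ℝ) < 0)]
      linarith
    have hSqne : Sq.Nonempty := by
      rcases Sq.eq_empty_or_nonempty with h | h
      · exfalso
        have h2 := hdense hζ₀S
        rw [h, closure_empty] at h2
        exact h2
      · exact h
    haveI : Countable ↥Sq := hSq_count.to_subtype
    haveI : Nonempty ↥Sq := hSqne.to_subtype
    have hρS : ∀ t, ρ ε t = sSup ((fun ζ => qfun f g ϑ t ζ) '' S) := by
      intro t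
      rw [hρ ε t, hS_def]
      exact iSup_subtype_eq_sSup_image (fun ζ => qfun f g ϑ t ζ)
    set m : ℝ → ℝ := fun t =>
      (⨆ ζ : ↥Sq, ENNReal.ofReal (qfun (Fc T α) (gexp T α) ϑ t ζ.1)).toReal with hm_def
    have hm_meas : Measurable m := by
      apply Measurable.ennreal_toReal
      apply Measurable.iSup
      intro ζ
      exact ENNReal.measurable_ofReal.comp (qF_measurable T hα0 ϑ ζ.1)
    have hgt : ∀ t ∈ Set.Icc (0:ℝ) T, t - ϑ ∉ ({1 - T, -1, 0, 1, T - 1} : Set ℝ) →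
        ρ ε t = m t ∧ ρ ε t ≤ GG T α ϑ t := by
      intro t ht htB
      have hq_eqF : ∀ ζ ∈ S, qfun f g ϑ t ζ = qfun (Fc T α) (gexp T α) ϑ t ζ := by
        intro ζ hζ
        have h1 : t - ζ ∈ Set.Icc (-T) T :=
          ⟨by linarith [ht.1, hζ.1.2], by linarith [ht.2, hζ.1.1]⟩
        have h2 : t - ϑ ∈ Set.Icc (-T) T := ⟨by linarith [ht.1], by linarith [ht.2]⟩
        unfold qfun
        rw [← f_eq_Fc hT hα0 hfper hf1 hf2 _ h1, ← f_eq_Fc hT hα0 hfper hf1 hf2 _ h2,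
          ← g_exp_eq hT hgper hg1 hg2 hg0 hg3 _ (hwindow t ht)]
      have hbd : ∀ ζ ∈ S, qfun f g ϑ t ζ ≤ GG T α ϑ t := by
        intro ζ hζ
        unfold qfun
        rw [div_le_iff₀ hζ.2.1, show t - ζ = (t - ϑ) - (ζ - ϑ) by ring]
        calc |f (t - ϑ - (ζ - ϑ)) - f (t - ϑ) - (ζ - ϑ) * g (t - ϑ)|
            ≤ |ζ - ϑ| * ((3 * α + 3) * ww T α (t - ϑ)) :=
              hkey (t - ϑ) (by linarith [ht.1]) (by linarith [ht.2]) htB (ζ - ϑ)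
                hζ.2.1 (le_of_lt (lt_of_lt_of_le hζ.2.2 hεle))
          _ = GG T α ϑ t * |ζ - ϑ| := by rw [GG]; ring
      have hAbdd : BddAbove ((fun ζ => qfun f g ϑ t ζ) '' S) := by
        refine ⟨GG T α ϑ t, ?_⟩
        rintro y ⟨ζ, hζ, rfl⟩
        exact hbd ζ hζ
      have hle : ρ ε t ≤ GG T α ϑ t := by
        rw [hρS t]
        exact csSup_le (hSne.image _) (by rintro y ⟨ζ, hζ, rfl⟩; exact hbd ζ hζ)
      refine ⟨?_, hle⟩
      have hstep2 : sSup ((fun ζ => qfun f g ϑ t ζ) '' S) =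
          sSup ((fun ζ => qfun f g ϑ t ζ) '' Sq) := by
        apply sSup_eq_of_dense (Set.image_mono hSq_sub)
        rintro y ⟨ζ, hζ, rfl⟩
        have hc : ContinuousAt (qfun f g ϑ t) ζ :=
          qfun_contAt hT hϑ0 hϑT (f_contAt hT hα0 hfper hf1 hf2) ht hζ.1
            (by intro hc; have h5 := hζ.2.1; rw [hc] at h5; simp at h5)
        exact hc.continuousWithinAt.mem_closure_image (hdense hζ)
      have hstep3 : (fun ζ => qfun f g ϑ t ζ) '' Sq =
          (fun ζ => qfun (Fc T α) (gexp T α) ϑ t ζ) '' Sq :=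
        Set.image_congr fun ζ hζ => hq_eqF ζ (hSq_sub hζ)
      have hbddq : BddAbove
          (Set.range fun ζ : ↥Sq => qfun (Fc T α) (gexp T α) ϑ t ζ.1) := by
        rw [← Set.image_eq_range, ← hstep3]
        exact hAbdd.mono (Set.image_mono hSq_sub)
      have hnn : 0 ≤ ⨆ ζ : ↥Sq, qfun (Fc T α) (gexp T α) ϑ t ζ.1 :=
        Real.iSup_nonneg fun ζ => qfun_nonneg _ _ _ _ _
      have hmap := Monotone.map_ciSup_of_continuousAt
        (f := ENNReal.ofReal) (g := fun ζ : ↥Sq => qfun (Fc T α) (gexp T α) ϑ t ζ.1)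
        (ENNReal.continuous_ofReal.continuousAt)
        (fun a b hab => ENNReal.ofReal_le_ofReal hab) hbddq
      have hstep4 : sSup ((fun ζ => qfun (Fc T α) (gexp T α) ϑ t ζ) '' Sq) =
          ⨆ ζ : ↥Sq, qfun (Fc T α) (gexp T α) ϑ t ζ.1 := by
        rw [Set.image_eq_range]
        rfl
      have hmap2 : ENNReal.ofReal (⨆ ζ : ↥Sq, qfun (Fc T α) (gexp T α) ϑ t ζ.1) =
          ⨆ ζ : ↥Sq, ENNReal.ofReal (qfun (Fc T α) (gexp T α) ϑ t ζ.1) := hmap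
      rw [hρS t, hstep2, hstep3, hstep4,
        show m t = (⨆ ζ : ↥Sq, ENNReal.ofReal (qfun (Fc T α) (gexp T α) ϑ t ζ.1)).toReal
          from rfl, ← hmap2, ENNReal.toReal_ofReal hnn]
    constructor
    · apply hm_meas.aestronglyMeasurable.congr
      apply hgood.mono
      rintro t ⟨ht, htB⟩
      exact ((hgt t ht htB).1).symm
    · apply hgood.mono
      rintro t ⟨ht, htB⟩
      refine ⟨?_, (hgt t ht htB).2⟩
      rw [hρ ε t]
      exact Real.iSup_nonneg fun ζ => div_nonneg (abs_nonneg _) (abs_nonneg _)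
  refine ⟨hmem_g, ⟨min (min ϑ (T - ϑ)) 1 / 4, hε₀pos, fun ε hε1 hε2 => ?_⟩, ?_⟩
  · obtain ⟨haesm, hae⟩ := hper ε hε1 hε2
    apply hG_mem.of_le haesm
    apply hae.mono
    rintro t ⟨h0, h1⟩
    rw [Real.norm_eq_abs, Real.norm_eq_abs, abs_of_nonneg h0,
      abs_of_nonneg (GG_nonneg hα0 ϑ t)]
    exact h1
  · -- Tendsto part
    have hF_meas : ∀ᶠ ε in nhdsWithin (0:ℝ) (Set.Ioi 0),
        AEStronglyMeasurable (fun t => ρ ε t ^ 2) μ := by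
      filter_upwards [Ioc_mem_nhdsGT hε₀pos] with ε hε
      obtain ⟨haesm, _⟩ := hper ε hε.1 hε.2
      exact (haesm.mul haesm).congr (Eventually.of_forall fun t => (pow_two _).symm)
    have h_bound : ∀ᶠ ε in nhdsWithin (0:ℝ) (Set.Ioi 0),
        ∀ᵐ t ∂μ, ‖(fun t => ρ ε t ^ 2) t‖ ≤ GG T α ϑ t ^ 2 := by
      filter_upwards [Ioc_mem_nhdsGT hε₀pos] with ε hε
      obtain ⟨_, hae⟩ := hper ε hε.1 hε.2
      apply hae.mono
      rintro t ⟨h0, h1⟩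
      rw [Real.norm_eq_abs, abs_of_nonneg (by positivity)]
      exact pow_le_pow_left₀ h0 h1 2
    have h_lim : ∀ᵐ t ∂μ, Filter.Tendsto (fun ε => ρ ε t ^ 2)
        (nhdsWithin (0:ℝ) (Set.Ioi 0)) (nhds ((fun _ : ℝ => (0:ℝ)) t)) := by
      apply hgood.mono
      rintro t ⟨ht, htB⟩
      have hu := hwindow t ht
      have hder := f_deriv hT hα0 hfper hgper hf1 hf2 hg1 hg2 hg3 (t - ϑ) hu htB
      have hcomp : HasDerivAt (fun ζ => f (t - ζ)) (g (t - ϑ)) ϑ := by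
        have h1 : HasDerivAt (fun ζ : ℝ => t - ζ) (-1) ϑ := by
          simpa using (hasDerivAt_id ϑ).const_sub t
        have h2 := hder.comp ϑ h1
        have h3 : -(g (t - ϑ)) * -1 = g (t - ϑ) := by ring
        rw [h3] at h2
        exact h2
      have hlil := hasDerivAt_iff_isLittleO.mp hcomp
      have hρ0 : ∀ ε : ℝ, 0 ≤ ρ ε t := fun ε => by
        rw [hρ ε t]
        exact Real.iSup_nonneg fun ζ => div_nonneg (abs_nonneg _) (abs_nonneg _)
      have hrt : Filter.Tendsto (fun ε => ρ ε t)
          (nhdsWithin (0:ℝ) (Set.Ioi 0)) (nhds 0) := by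
        rw [NormedAddCommGroup.tendsto_nhds_zero]
        intro η hη
        have hev := hlil.def (show (0:ℝ) < η / 2 by linarith)
        rw [Metric.eventually_nhds_iff] at hev
        obtain ⟨r, hr0, hr⟩ := hev
        filter_upwards [Ioo_mem_nhdsGT hr0] with ε hε
        have hle : ρ ε t ≤ η / 2 := by
          rw [hρ ε t]
          refine Real.iSup_le ?_ (by linarith)
          rintro ⟨ζ, hζIoo, hζpos, hζlt⟩
          have hd : dist ζ ϑ < r := by
            rw [Real.dist_eq]; exact hζlt.trans hε.2
          have hnum := hr hd
          simp only [Real.norm_eq_abs, smul_eq_mul] at hnum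
          rw [div_le_iff₀ hζpos]
          exact hnum
        rw [Real.norm_eq_abs, abs_of_nonneg (hρ0 ε)]
        linarith
      have hp := hrt.pow 2
      simpa using hp
    have hdct := MeasureTheory.tendsto_integral_filter_of_dominated_convergence
      (μ := μ) (bound := fun t => GG T α ϑ t ^ 2)
      (F := fun ε (t : ℝ) => ρ ε t ^ 2) (f := fun _ : ℝ => (0:ℝ))
      hF_meas h_bound (GG_sq_integrable hT hα ϑ) h_lim
    have hconv : (fun ε => ∫ t in (0:ℝ)..T, (ρ ε t) ^ 2) =
        fun ε => ∫ t, (ρ ε t) ^ 2 ∂μ := by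
      funext ε
      rw [hμ_def, intervalIntegral.integral_of_le (by linarith : (0:ℝ) ≤ T),
        MeasureTheory.integral_Icc_eq_integral_Ioc]
    rw [hconv]
    simpa using hdct
end

section
/- Assume the α-signal setting below with 1/2 < α < 1, and let D := {k·2^{−m} : m ∈ ℕ₀, k ∈ ℤ} be the set of dyadic rationals. Then for every ϑ ∈ (0,T) and every ε > 0, the function t ↦ sup_{ζ∈D∩(0,T), |ζ−ϑ|<ε} |g_α(t−ζ) − g_α(t−ϑ)| equals +∞ on a set of positive Lebesgue measure in [0,T]; in particular it does not belong to L²([0,T], dt). -/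
open MeasureTheory intervalIntegral ENNReal

lemma exists_dyadic_btwn' {a b : ℝ} (hab : a < b) :
    ∃ (m : ℕ) (k : ℤ), a < (k : ℝ) / 2 ^ m ∧ (k : ℝ) / 2 ^ m < b := by
  obtain ⟨m, hm⟩ := pow_unbounded_of_one_lt (R := ℝ) (1 / (b - a)) one_lt_two
  have h2m : (0:ℝ) < 2 ^ m := by positivity
  have hlt : 1 / (2:ℝ) ^ m < b - a := by
    rw [div_lt_iff₀ h2m] at *
    have := (div_lt_iff₀ (by linarith)).mp hm
    nlinarith [sub_pos.mpr hab]
  refine ⟨m, ⌊a * 2 ^ m⌋ + 1, ?_, ?_⟩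
  · rw [lt_div_iff₀ h2m]
    push_cast
    linarith [Int.lt_floor_add_one (a * 2 ^ m)]
  · rw [div_lt_iff₀ h2m]
    have h1 : (⌊a * 2 ^ m⌋ : ℝ) ≤ a * 2 ^ m := Int.floor_le _
    have : 1 / (2:ℝ) ^ m * 2 ^ m < (b - a) * 2 ^ m :=
      mul_lt_mul_of_pos_right hlt h2m
    rw [one_div, inv_mul_cancel₀ h2m.ne'] at this
    push_cast
    nlinarith

lemma exists_delta' {α : ℝ} (hα0 : 0 < α) (hα2 : α < 1) (M : ℝ) :
    ∃ δ : ℝ, 0 < δ ∧ δ < 1 ∧ ∀ u : ℝ, 0 < u → u < δ → M < α * u ^ (α - 1) := by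
  set C : ℝ := max M 0 / α + 1 with hC
  have hCpos : 0 < C := by
    rw [hC]
    have : (0:ℝ) ≤ max M 0 / α := div_nonneg (le_max_right _ _) hα0.le
    linarith
  have hexp : α - 1 < 0 := by linarith
  set δ0 : ℝ := C ^ (1 / (α - 1)) with hδ0
  have hδ0pos : 0 < δ0 := Real.rpow_pos_of_pos hCpos _
  refine ⟨min δ0 (1/2), lt_min hδ0pos (by norm_num), (min_le_right _ _).trans_lt (by norm_num),
    fun u hu hud => ?_⟩
  have hud0 : u < δ0 := hud.trans_le (min_le_left _ _)
  have h1 : δ0 ^ (α - 1) < u ^ (α - 1) := Real.rpow_lt_rpow_of_neg hu hud0 hexp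
  have h2 : δ0 ^ (α - 1) = C := by
    rw [hδ0, ← Real.rpow_mul hCpos.le, one_div,
      inv_mul_cancel₀ (sub_ne_zero.mpr hα2.ne), Real.rpow_one]
  have h3 : α * C ≤ α * u ^ (α - 1) := by
    have := h1.le
    rw [h2] at this
    exact mul_le_mul_of_nonneg_left this hα0.le
  have h4 : M < α * C := by
    have : α * C = max M 0 + α := by
      rw [hC]
      field_simp
    rw [this]
    have := le_max_left M 0
    linarith
  linarith

/-- α-signal setting with `1/2 < α < 1`, `D` the dyadic rationals. For
every `ϑ ∈ (0,T)` and every `ε > 0`, the function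
`t ↦ sup_{ζ∈D∩(0,T), |ζ-ϑ|<ε} |g_α(t-ζ) - g_α(t-ϑ)|` (computed in `[0,∞]`) equals
`+∞` on a set of positive Lebesgue measure in `[0,T]`; in particular it is not
square-integrable on `[0,T]`. -/
theorem alpha_signal_dyadic_sup_not_L2 (T α : ℝ) (hT : 2 < T)
    (hα₁ : 1 / 2 < α) (hα₂ : α < 1)
    (f g : ℝ → ℝ) (hfper : Function.Periodic f T) (hgper : Function.Periodic g T)
    (hf1 : ∀ x : ℝ, |x| ≤ 1 → f x = (1 - |x|) ^ α)
    (hf2 : ∀ x ∈ Set.Icc (1:ℝ) (T - 1), f x = 0)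
    (hg1 : ∀ x ∈ Set.Ioo (0:ℝ) 1, g x = α * (1 - x) ^ (α - 1))
    (hg2 : ∀ x ∈ Set.Ioo (-1:ℝ) 0, g x = -(α * (1 + x) ^ (α - 1)))
    (hg0 : g 0 = 0)
    (hg3 : ∀ x ∈ Set.Icc (1:ℝ) (T - 1), g x = 0)
    (D : Set ℝ) (hD : D = {x : ℝ | ∃ (m : ℕ) (k : ℤ), x = (k : ℝ) / 2 ^ m}) :
    ∀ ϑ ∈ Set.Ioo (0:ℝ) T, ∀ ε : ℝ, 0 < ε →
      ∀ h : ℝ → ℝ≥0∞,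
        (∀ t, h t = ⨆ ζ : {ζ : ℝ // ζ ∈ D ∩ Set.Ioo 0 T ∧ |ζ - ϑ| < ε},
          ENNReal.ofReal |g (t - ζ.1) - g (t - ϑ)|) →
        0 < volume {t ∈ Set.Icc (0:ℝ) T | h t = ⊤} ∧
        ∫⁻ t in Set.Icc (0:ℝ) T, (h t) ^ 2 = ⊤ := by
  intro ϑ hϑ ε hε h hh
  obtain ⟨hϑ0, hϑT⟩ := hϑ
  have hα0 : 0 < α := by linarith
  -- key: find an open interval J ⊆ Icc 0 T on which h = ⊤
  have key : ∃ a b : ℝ, a < b ∧ Set.Ioo a b ⊆ Set.Icc (0:ℝ) T ∧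
      ∀ t ∈ Set.Ioo a b, h t = ⊤ := by
    rcases lt_or_ge ϑ (T - 1) with hcase | hcase
    · -- right singularity: t near ϑ + 1
      set η : ℝ := min (ε / 2) ((T - 1 - ϑ) / 2) with hη
      have hηpos : 0 < η := lt_min (by linarith) (by linarith)
      have hηε : η ≤ ε / 2 := min_le_left _ _
      have hηT : η ≤ (T - 1 - ϑ) / 2 := min_le_right _ _
      refine ⟨ϑ + 1, ϑ + 1 + η, by linarith, fun t ht => ⟨by linarith [ht.1], by linarith [ht.2]⟩,
        fun t ht => ?_⟩
      obtain ⟨ht1, ht2⟩ := ht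
      rw [hh t, iSup_eq_top]
      intro b hb
      obtain ⟨δ, hδ0', hδ1, hδM⟩ := exists_delta' hα0 hα₂ (b.toReal + |g (t - ϑ)|)
      -- find dyadic ζ ∈ (t-1, min (t-1+δ) (min (ϑ+ε) T))
      have hlo : t - 1 < min (t - 1 + δ) (min (ϑ + ε) T) := by
        refine lt_min (by linarith) (lt_min (by linarith) (by linarith))
      obtain ⟨m, k, hζ1, hζ2⟩ := exists_dyadic_btwn' hlo
      set ζ : ℝ := (k : ℝ) / 2 ^ m with hζ
      have hζδ : ζ < t - 1 + δ := hζ2.trans_le (min_le_left _ _)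
      have hζε : ζ < ϑ + ε := hζ2.trans_le ((min_le_right _ _).trans (min_le_left _ _))
      have hζT : ζ < T := hζ2.trans_le ((min_le_right _ _).trans (min_le_right _ _))
      have hζϑ : ϑ < ζ := by linarith
      have hζmem : ζ ∈ D ∩ Set.Ioo 0 T ∧ |ζ - ϑ| < ε := by
        refine ⟨⟨by rw [hD]; exact ⟨m, k, rfl⟩, by constructor <;> linarith⟩, ?_⟩
        rw [abs_lt]; constructor <;> linarith
      refine ⟨⟨ζ, hζmem⟩, ?_⟩
      have hx : t - ζ ∈ Set.Ioo (0:ℝ) 1 := ⟨by linarith, by linarith⟩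
      have hgval : g (t - ζ) = α * (1 - (t - ζ)) ^ (α - 1) := hg1 _ hx
      have hu : (0:ℝ) < 1 - (t - ζ) := by linarith [hx.2]
      have hu' : 1 - (t - ζ) < δ := by linarith
      have hbig := hδM _ hu hu'
      rw [ENNReal.lt_ofReal_iff_toReal_lt hb.ne]
      calc b.toReal < α * (1 - (t - ζ)) ^ (α - 1) - |g (t - ϑ)| := by linarith
        _ ≤ |g (t - ζ)| - |g (t - ϑ)| := by
            rw [hgval]; exact sub_le_sub_right (le_abs_self _) _
        _ ≤ |g (t - ζ) - g (t - ϑ)| := abs_sub_abs_le_abs_sub _ _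
    · -- left singularity: t near ϑ - 1
      have hϑ1 : 1 < ϑ := by linarith
      set η : ℝ := min (ε / 2) ((ϑ - 1) / 2) with hη
      have hηpos : 0 < η := lt_min (by linarith) (by linarith)
      have hηε : η ≤ ε / 2 := min_le_left _ _
      have hηϑ : η ≤ (ϑ - 1) / 2 := min_le_right _ _
      refine ⟨ϑ - 1 - η, ϑ - 1, by linarith, fun t ht => ⟨by linarith [ht.1], by linarith [ht.2]⟩,
        fun t ht => ?_⟩
      obtain ⟨ht1, ht2⟩ := ht
      rw [hh t, iSup_eq_top]
      intro b hb
      obtain ⟨δ, hδ0', hδ1, hδM⟩ := exists_delta' hα0 hα₂ (b.toReal + |g (t - ϑ)|)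
      -- find dyadic ζ ∈ (max (t+1-δ) (max (ϑ-ε) 0), t+1)
      have hlo : max (t + 1 - δ) (max (ϑ - ε) 0) < t + 1 := by
        refine max_lt (by linarith) (max_lt (by linarith) (by linarith))
      obtain ⟨m, k, hζ1, hζ2⟩ := exists_dyadic_btwn' hlo
      set ζ : ℝ := (k : ℝ) / 2 ^ m with hζ
      have hζδ : t + 1 - δ < ζ := ((le_max_left _ _).trans_lt hζ1)
      have hζε : ϑ - ε < ζ := (((le_max_left _ _).trans (le_max_right _ _)).trans_lt hζ1)
      have hζ0 : 0 < ζ := (((le_max_right _ _).trans (le_max_right _ _)).trans_lt hζ1)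
      have hζϑ : ζ < ϑ := by linarith
      have hζmem : ζ ∈ D ∩ Set.Ioo 0 T ∧ |ζ - ϑ| < ε := by
        refine ⟨⟨by rw [hD]; exact ⟨m, k, rfl⟩, by constructor <;> linarith⟩, ?_⟩
        rw [abs_lt]; constructor <;> linarith
      refine ⟨⟨ζ, hζmem⟩, ?_⟩
      have hx : t - ζ ∈ Set.Ioo (-1:ℝ) 0 := ⟨by linarith, by linarith⟩
      have hgval : g (t - ζ) = -(α * (1 + (t - ζ)) ^ (α - 1)) := hg2 _ hx
      have hu : (0:ℝ) < 1 + (t - ζ) := by linarith [hx.1]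
      have hu' : 1 + (t - ζ) < δ := by linarith
      have hbig := hδM _ hu hu'
      rw [ENNReal.lt_ofReal_iff_toReal_lt hb.ne]
      have habs : α * (1 + (t - ζ)) ^ (α - 1) ≤ |g (t - ζ)| := by
        rw [hgval, abs_neg]; exact le_abs_self _
      calc b.toReal < α * (1 + (t - ζ)) ^ (α - 1) - |g (t - ϑ)| := by linarith
        _ ≤ |g (t - ζ)| - |g (t - ϑ)| := sub_le_sub_right habs _
        _ ≤ |g (t - ζ) - g (t - ϑ)| := abs_sub_abs_le_abs_sub _ _
  obtain ⟨a, b, hab, hJsub, hJtop⟩ := key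
  have hvolJ : 0 < volume (Set.Ioo a b) := by
    rw [Real.volume_Ioo]
    exact ENNReal.ofReal_pos.mpr (by linarith)
  constructor
  · refine hvolJ.trans_le (measure_mono fun t ht => ?_)
    exact ⟨hJsub ht, hJtop t ht⟩
  · rw [eq_top_iff]
    calc (⊤ : ℝ≥0∞) = ∫⁻ _ in Set.Ioo a b, ⊤ := by
          rw [setLIntegral_const, ENNReal.top_mul hvolJ.ne']
      _ = ∫⁻ t in Set.Ioo a b, (h t) ^ 2 := by
          refine setLIntegral_congr_fun measurableSet_Ioo (
            fun t ht => ?_)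
          show (⊤ : ℝ≥0∞) = h t ^ 2
          rw [hJtop t ht, ENNReal.top_pow two_ne_zero]
      _ ≤ ∫⁻ t in Set.Icc (0:ℝ) T, (h t) ^ 2 := lintegral_mono_set hJsub
end
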